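/- arXiv:hep-th/0301115 — 5 statements merged into one kernel-verified Lean document; each statement's English description precedes it below -/
import Mathlib

section
/- Let g : ℝ⁴ \ {x : x·x = 0} → ℝ be defined by g(β) = (β·β)⁻¹. Then g satisfies the wave equation □g = 0 at every point β with β·β ≠ 0, i.e. ∂₀²g(β) − ∂₁²g(β) − ∂₂²g(β) − ∂₃²g(β) = 0. -/
/-!
For a function of the Minkowski square, the chain rule gives ∂_ν φ(x²) = 2 φ'(x²) (x·e_ν), and
differentiating once more and summing with the signs of □ yields
□ φ(x²) = 4 x² φ''(x²) + 8 φ'(x²), where 8 is twice the dimension.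
The profile φ(s) = 1/s solves s φ'' + 2 φ' = 0.
-/

noncomputable section

/-- Minkowski inner product on ℝ⁴: x·y = x₀y₀ − x₁y₁ − x₂y₂ − x₃y₃. -/
def mink (x y : Fin 4 → ℝ) : ℝ := x 0 * y 0 - x 1 * y 1 - x 2 * y 2 - x 3 * y 3

/-- Partial derivative in the ν-th coordinate direction. -/
def pd {E : Type*} [NormedAddCommGroup E] [NormedSpace ℝ E]
    (ν : Fin 4) (f : (Fin 4 → ℝ) → E) (x : Fin 4 → ℝ) : E :=
  fderiv ℝ f x (Pi.single ν 1)

/-- The d'Alembertian □ = ∂₀² − ∂₁² − ∂₂² − ∂₃². -/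
def box {E : Type*} [NormedAddCommGroup E] [NormedSpace ℝ E]
    (f : (Fin 4 → ℝ) → E) (x : Fin 4 → ℝ) : E :=
  pd 0 (pd 0 f) x - pd 1 (pd 1 f) x - pd 2 (pd 2 f) x - pd 3 (pd 3 f) x

open Filter Topology

theorem HasFDerivAt.pd_eq {E : Type*} [NormedAddCommGroup E] [NormedSpace ℝ E]
    {f : (Fin 4 → ℝ) → E} {f' : (Fin 4 → ℝ) →L[ℝ] E} {x : Fin 4 → ℝ}
    (hf : HasFDerivAt f f' x) (ν : Fin 4) : pd ν f x = f' (Pi.single ν 1) := by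
  rw [pd, hf.fderiv]

theorem mink_comm (x y : Fin 4 → ℝ) : mink x y = mink y x := by
  unfold mink; ring

theorem isBilinearMap_mink : IsBilinearMap ℝ mink := by
  constructor <;> intros <;> simp only [mink, Pi.add_apply, Pi.smul_apply, smul_eq_mul] <;> ring

def minkL : (Fin 4 → ℝ) →L[ℝ] (Fin 4 → ℝ) →L[ℝ] ℝ :=
  isBilinearMap_mink.toContinuousBilinearMap

@[simp]
theorem minkL_apply (x y : Fin 4 → ℝ) : minkL x y = mink x y := rfl

theorem continuous_mink_self : Continuous fun x : Fin 4 → ℝ => mink x x :=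
  minkL.continuous₂.comp (continuous_id.prodMk continuous_id)

theorem hasFDerivAt_mink_self (x : Fin 4 → ℝ) :
    HasFDerivAt (fun y => mink y y) ((2 : ℝ) • minkL x) x := by
  refine (minkL.hasFDerivAt_of_bilinear (hasFDerivAt_id x) (hasFDerivAt_id x)).congr_fderiv ?_
  ext v
  simp [mink_comm v x, two_mul]

section Radial

variable {φ : ℝ → ℝ} {x : Fin 4 → ℝ} (ν : Fin 4)

theorem hasFDerivAt_comp_mink_self {φ' : ℝ} (hφ : HasDerivAt φ φ' (mink x x)) :
    HasFDerivAt (fun y => φ (mink y y)) ((2 * φ') • minkL x) x := by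
  refine (hφ.comp_hasFDerivAt (f := fun y => mink y y) x
    (hasFDerivAt_mink_self x)).congr_fderiv ?_
  rw [smul_smul, mul_comm]

theorem pd_comp_mink_self (hφ : DifferentiableAt ℝ φ (mink x x)) :
    pd ν (fun y => φ (mink y y)) x = 2 * deriv φ (mink x x) * mink x (Pi.single ν 1) := by
  simp [(hasFDerivAt_comp_mink_self hφ.hasDerivAt).pd_eq]

theorem pd_pd_comp_mink_self (hφ : ∀ᶠ s in 𝓝 (mink x x), DifferentiableAt ℝ φ s)
    (hφ' : DifferentiableAt ℝ (deriv φ) (mink x x)) :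
    pd ν (pd ν fun y => φ (mink y y)) x =
      4 * deriv (deriv φ) (mink x x) * mink x (Pi.single ν 1) ^ 2 +
        2 * deriv φ (mink x x) * mink (Pi.single ν 1) (Pi.single ν 1) := by
  set e : Fin 4 → ℝ := Pi.single ν 1
  have hfirst : pd ν (fun y => φ (mink y y)) =ᶠ[𝓝 x]
      fun y => 2 * deriv φ (mink y y) * mink y e := by
    filter_upwards [(continuous_mink_self.tendsto x).eventually hφ] with y hy
    exact pd_comp_mink_self ν hy
  have hsecond := ((hasFDerivAt_comp_mink_self hφ'.hasDerivAt).const_mul 2).fun_mul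
    ((minkL.flip e).hasFDerivAt)
  rw [pd, hfirst.fderiv_eq, ← pd]
  refine (hsecond.pd_eq ν).trans ?_
  simp only [add_apply, smul_apply, ContinuousLinearMap.flip_apply, minkL_apply, smul_eq_mul]
  ring

theorem box_comp_mink_self (hφ : ∀ᶠ s in 𝓝 (mink x x), DifferentiableAt ℝ φ s)
    (hφ' : DifferentiableAt ℝ (deriv φ) (mink x x)) :
    box (fun y => φ (mink y y)) x =
      4 * mink x x * deriv (deriv φ) (mink x x) + 8 * deriv φ (mink x x) := by
  simp only [box, pd_pd_comp_mink_self _ hφ hφ']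
  simp only [mink, Pi.single_apply, Fin.reduceEq, if_true, if_false]
  ring

end Radial

/-- The function g(β) = (β·β)⁻¹ satisfies the wave equation □g = 0 at every
point β with β·β ≠ 0. -/
theorem wave_equation_inv_minkowski_sq :
    ∀ β : Fin 4 → ℝ, mink β β ≠ 0 →
      box (fun β' => (mink β' β')⁻¹) β = 0 := by
  intro β hβ
  have hφ : ∀ᶠ s in 𝓝 (mink β β), DifferentiableAt ℝ (fun s => s⁻¹) s :=
    (eventually_ne_nhds hβ).mono fun s hs => differentiableAt_inv hs
  have hφ' := ((hasDerivAt_pow 2 (mink β β)).fun_inv (pow_ne_zero 2 hβ)).fun_neg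
  rw [box_comp_mink_self hφ (by rw [deriv_inv']; exact hφ'.differentiableAt), deriv_inv',
    hφ'.deriv]
  field_simp
  ring
end
end

section
/- For 0 < κ < 1 let B_κ = ((κ,0,0,0) + V̄₊) ∩ ((κ⁻¹,0,0,0) − V̄₊), where V̄₊ is the closed forward light cone. Let ι(β) = β/(β·β) and I(Ξ)(β) = (β·β)⁻¹ Ξ(ι(β)). Then: (i) ι(B_κ) ⊆ B_κ; (ii) for every smooth Ξ : V₊ → ℂ one has ‖I(Ξ)‖_{B_κ} ≤ κ⁻² ‖Ξ‖_{B_κ}, and for each ν ∈ {0,1,2,3} one has ‖∂_ν I(Ξ)‖_{B_κ} ≤ 2κ⁻³ ‖Ξ‖_{B_κ} + 3κ⁻⁴ Σ_{ν'=0}^{3} ‖∂_{ν'} Ξ‖_{B_κ}. -/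
noncomputable section

/-- The open forward light cone V₊ = {x : x₀ > 0, x·x > 0}. -/
def Vplus : Set (Fin 4 → ℝ) := {x | 0 < x 0 ∧ 0 < mink x x}

/-- The closed forward light cone V̄₊ = {x : x₀ ≥ 0, x·x ≥ 0}. -/
def VplusCl : Set (Fin 4 → ℝ) := {x | 0 ≤ x 0 ∧ 0 ≤ mink x x}

/-- The unit time direction (1,0,0,0). -/
def e0 : Fin 4 → ℝ := Pi.single 0 1

/-- The double cone B_κ = ((κ,0,0,0) + V̄₊) ∩ ((κ⁻¹,0,0,0) − V̄₊). -/
def Bk (κ : ℝ) : Set (Fin 4 → ℝ) :=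
  {β | β - κ • e0 ∈ VplusCl ∧ κ⁻¹ • e0 - β ∈ VplusCl}

/-- The involution ι(β) = β/(β·β). -/
def iota (β : Fin 4 → ℝ) : Fin 4 → ℝ := (mink β β)⁻¹ • β

/-- The induced map I(Ξ)(β) = (β·β)⁻¹ · Ξ(ι(β)). -/
def Imap (Ξ : (Fin 4 → ℝ) → ℂ) (β : Fin 4 → ℝ) : ℂ :=
  ((mink β β)⁻¹ : ℝ) • Ξ (iota β)

/-- The sup-seminorm ‖f‖_B = sup_{β ∈ B} |f(β)|. -/
def supOn (B : Set (Fin 4 → ℝ)) (f : (Fin 4 → ℝ) → ℂ) : ℝ :=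
  ⨆ β : B, ‖f (β : Fin 4 → ℝ)‖

namespace ImapAux

abbrev E4 := Fin 4 → ℝ

lemma mem_Bk {κ : ℝ} {β : Fin 4 → ℝ} :
    β ∈ Bk κ ↔ (κ ≤ β 0 ∧ 0 ≤ mink β β - 2*κ*β 0 + κ^2 ∧ β 0 ≤ κ⁻¹ ∧
      0 ≤ κ⁻¹^2 - 2*κ⁻¹*β 0 + mink β β) := by
  simp only [Bk, VplusCl, mink, e0, Set.mem_setOf_eq, Pi.sub_apply, Pi.smul_apply,
    Pi.single_apply, show ((1:Fin 4)=0) = False by decide, show ((2:Fin 4)=0) = False by decide,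
    show ((3:Fin 4)=0) = False by decide, if_false, if_true]
  norm_num
  simp only [sq, mul_inv]
  constructor
  · rintro ⟨⟨h1, h2⟩, h3, h4⟩
    refine ⟨by linarith, by nlinarith, by linarith, by nlinarith⟩
  · rintro ⟨h1, h2, h3, h4⟩
    refine ⟨⟨by linarith, by nlinarith⟩, by linarith, by nlinarith⟩

lemma sq_fin_le {β : Fin 4 → ℝ} (hm : 0 ≤ mink β β) (ν : Fin 4) : β ν * β ν ≤ β 0 * β 0 := by
  have := hm
  simp only [mink] at this
  fin_cases ν <;> simp <;> nlinarith [sq_nonneg (β 1), sq_nonneg (β 2), sq_nonneg (β 3)]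

lemma Bk_bounds {κ : ℝ} (hκ0 : 0 < κ) {β : Fin 4 → ℝ} (hβ : β ∈ Bk κ) :
    κ^2 ≤ mink β β ∧ mink β β ≤ κ⁻¹^2 ∧ (∀ ν, |β ν| ≤ κ⁻¹ * mink β β) ∧
      (∀ ν, |β ν| ≤ κ⁻¹) := by
  obtain ⟨h1, h2, h3, h4⟩ := mem_Bk.mp hβ
  have hki : κ * κ⁻¹ = 1 := mul_inv_cancel₀ hκ0.ne'
  have hkinv : 0 < κ⁻¹ := inv_pos.mpr hκ0
  have hm1 : κ^2 ≤ mink β β := by nlinarith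
  have hm0 : 0 ≤ mink β β := by nlinarith
  have hβ0 : 0 < β 0 := by nlinarith
  have hkb : κ * β 0 ≤ mink β β := by nlinarith
  have hb0 : β 0 ≤ κ⁻¹ * mink β β := by nlinarith
  have hmb : mink β β ≤ β 0 * β 0 := by
    simp only [mink]; nlinarith [sq_nonneg (β 1), sq_nonneg (β 2), sq_nonneg (β 3)]
  have hm2 : mink β β ≤ κ⁻¹^2 := by nlinarith
  refine ⟨hm1, hm2, fun ν => ?_, fun ν => ?_⟩
  · have hs := sq_fin_le hm0 ν
    have : |β ν| ≤ β 0 := by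
      rw [abs_le]; constructor <;> nlinarith
    linarith
  · have hs := sq_fin_le hm0 ν
    have : |β ν| ≤ β 0 := by
      rw [abs_le]; constructor <;> nlinarith
    linarith

lemma mink_pos_of_mem {κ : ℝ} (hκ0 : 0 < κ) {β : Fin 4 → ℝ} (hβ : β ∈ Bk κ) :
    0 < mink β β := lt_of_lt_of_le (by positivity) (Bk_bounds hκ0 hβ).1

lemma iota_mem_Bk {κ : ℝ} (hκ0 : 0 < κ) {β : Fin 4 → ℝ} (hβ : β ∈ Bk κ) :
    iota β ∈ Bk κ := by
  obtain ⟨h1, h2, h3, h4⟩ := mem_Bk.mp hβ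
  have hm : 0 < mink β β := mink_pos_of_mem hκ0 hβ
  have hmi : mink β β * (mink β β)⁻¹ = 1 := mul_inv_cancel₀ hm.ne'
  have hki : κ * κ⁻¹ = 1 := mul_inv_cancel₀ hκ0.ne'
  have hkinv : 0 < κ⁻¹ := inv_pos.mpr hκ0
  have hminv : 0 < (mink β β)⁻¹ := inv_pos.mpr hm
  have hq : mink (iota β) (iota β) = (mink β β)⁻¹ * ((mink β β)⁻¹ * mink β β) := by
    simp only [iota, mink, Pi.smul_apply, smul_eq_mul]; ring
  have hq' : mink (iota β) (iota β) = (mink β β)⁻¹ := by rw [hq, inv_mul_cancel₀ hm.ne', mul_one]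
  have hβ0 : 0 < β 0 := by nlinarith
  have hkb : κ * β 0 ≤ mink β β := by nlinarith
  have hmb : mink β β ≤ β 0 * β 0 := by
    simp only [mink]; nlinarith [sq_nonneg (β 1), sq_nonneg (β 2), sq_nonneg (β 3)]
  have hkb1 : κ * β 0 ≤ 1 := by nlinarith
  have hbk : κ * mink β β ≤ β 0 := by
    nlinarith [mul_le_mul_of_nonneg_right hkb1 hβ0.le, mul_le_mul_of_nonneg_left hmb hκ0.le]
  rw [mem_Bk, hq']
  have hi0 : (iota β) 0 = (mink β β)⁻¹ * β 0 := by simp [iota]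
  rw [hi0]
  refine ⟨by nlinarith, by nlinarith, by nlinarith, by nlinarith⟩

def Lq (β : E4) : E4 →L[ℝ] ℝ :=
  (2 * β 0) • ContinuousLinearMap.proj 0 - (2 * β 1) • ContinuousLinearMap.proj 1
    - (2 * β 2) • ContinuousLinearMap.proj 2 - (2 * β 3) • ContinuousLinearMap.proj 3

lemma Lq_apply (β v : E4) : Lq β v = 2 * mink β v := by
  simp [Lq, mink, ContinuousLinearMap.proj_apply]; ring

lemma hasFDerivAt_q (β : E4) : HasFDerivAt (fun x => mink x x) (Lq β) β := by
  have h : ∀ i : Fin 4, HasFDerivAt (fun x : E4 => x i * x i)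
      ((2 * β i) • (ContinuousLinearMap.proj i : E4 →L[ℝ] ℝ)) β := by
    intro i
    have h1 : HasFDerivAt (fun x : E4 => x i) (ContinuousLinearMap.proj i : E4 →L[ℝ] ℝ) β :=
      (ContinuousLinearMap.proj i : E4 →L[ℝ] ℝ).hasFDerivAt
    have := h1.mul h1
    refine this.congr_fderiv ?_
    ext v
    simp [two_mul]
    ring
  exact (((h 0).sub (h 1)).sub (h 2)).sub (h 3)

lemma hasFDerivAt_Imap {β : E4} (hm : mink β β ≠ 0) {Ξ : E4 → ℂ}
    (hd : DifferentiableAt ℝ Ξ (iota β)) :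
    HasFDerivAt (Imap Ξ)
      (((mink β β)⁻¹ : ℝ) • ((fderiv ℝ Ξ (iota β)).comp
          (((mink β β)⁻¹ : ℝ) • ContinuousLinearMap.id ℝ E4
            + ((-((mink β β)^2)⁻¹ : ℝ) • Lq β).smulRight β))
        + ((-((mink β β)^2)⁻¹ : ℝ) • Lq β).smulRight (Ξ (iota β))) β := by
  have hcinv : HasFDerivAt (fun x : E4 => (mink x x)⁻¹)
      ((-((mink β β)^2)⁻¹ : ℝ) • Lq β) β :=
    HasDerivAt.comp_hasFDerivAt (f := fun x => mink x x) β (hasDerivAt_inv hm) (hasFDerivAt_q β)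
  have hiota : HasFDerivAt iota
      (((mink β β)⁻¹ : ℝ) • ContinuousLinearMap.id ℝ E4
        + ((-((mink β β)^2)⁻¹ : ℝ) • Lq β).smulRight β) β :=
    hcinv.smul (hasFDerivAt_id β)
  have hcomp : HasFDerivAt (fun x => Ξ (iota x))
      ((fderiv ℝ Ξ (iota β)).comp
        (((mink β β)⁻¹ : ℝ) • ContinuousLinearMap.id ℝ E4
          + ((-((mink β β)^2)⁻¹ : ℝ) • Lq β).smulRight β)) β :=
    hd.hasFDerivAt.comp β hiota
  exact hcinv.smul hcomp

lemma pd_Imap_eq {β : E4} (hm : mink β β ≠ 0) {Ξ : E4 → ℂ}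
    (hd : DifferentiableAt ℝ Ξ (iota β)) (ν : Fin 4) :
    pd ν (Imap Ξ) β =
      ((mink β β)⁻¹ : ℝ) • (fderiv ℝ Ξ (iota β) (((mink β β)⁻¹ : ℝ) • (Pi.single ν 1 : E4)
          + ((-((mink β β)^2)⁻¹ * (2 * mink β (Pi.single ν 1))) : ℝ) • β))
        + ((-((mink β β)^2)⁻¹ * (2 * mink β (Pi.single ν 1))) : ℝ) • Ξ (iota β) := by
  rw [pd, (hasFDerivAt_Imap hm hd).fderiv]
  simp only [ContinuousLinearMap.add_apply, ContinuousLinearMap.coe_smul',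
    Pi.smul_apply, ContinuousLinearMap.coe_comp', Function.comp_apply,
    ContinuousLinearMap.smulRight_apply, ContinuousLinearMap.smul_apply,
    ContinuousLinearMap.id_apply, Lq_apply, smul_smul, smul_eq_mul]

lemma abs_mink_single (β : E4) (ν : Fin 4) : |mink β (Pi.single ν 1)| = |β ν| := by
  fin_cases ν <;>
    simp [mink, Pi.single_apply, show ((1:Fin 4)=0) = False by decide,
      show ((2:Fin 4)=0) = False by decide, show ((3:Fin 4)=0) = False by decide,
      show ((0:Fin 4)=1) = False by decide, abs_neg]

lemma eq_sum_single (β : E4) : β = ∑ μ : Fin 4, β μ • (Pi.single μ 1 : E4) := by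
  ext i
  rw [Finset.sum_apply]
  simp [Pi.single_apply]

lemma norm_fderiv_vec {Ξ : E4 → ℂ} (β x : E4) :
    ‖fderiv ℝ Ξ x β‖ ≤ ∑ μ : Fin 4, |β μ| * ‖pd μ Ξ x‖ := by
  conv_lhs => rw [eq_sum_single β]
  rw [map_sum]
  refine (norm_sum_le _ _).trans ?_
  apply Finset.sum_le_sum
  intro μ _
  rw [map_smul, norm_smul, Real.norm_eq_abs]
  exact le_refl _

lemma pd_Imap_pointwise {κ : ℝ} (hκ0 : 0 < κ) {β : E4} (hβ : β ∈ Bk κ) {Ξ : E4 → ℂ}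
    (hd : DifferentiableAt ℝ Ξ (iota β)) (ν : Fin 4) :
    ‖pd ν (Imap Ξ) β‖ ≤ 2 * κ⁻¹^3 * ‖Ξ (iota β)‖ + κ⁻¹^4 * ‖pd ν Ξ (iota β)‖
      + 2 * κ⁻¹^4 * ∑ μ : Fin 4, ‖pd μ Ξ (iota β)‖ := by
  obtain ⟨hm1, hm2, hb, _⟩ := Bk_bounds hκ0 hβ
  have hm : 0 < mink β β := mink_pos_of_mem hκ0 hβ
  rw [pd_Imap_eq hm.ne' hd ν]
  set m := mink β β with hmdef
  set u := m⁻¹ with hudef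
  set c : ℝ := -(m^2)⁻¹ * (2 * mink β (Pi.single ν 1)) with hcdef
  set A := ‖Ξ (iota β)‖ with hAdef
  set S : Fin 4 → ℝ := fun μ => ‖pd μ Ξ (iota β)‖ with hSdef
  set T := ∑ μ : Fin 4, S μ with hTdef
  have hu0 : 0 < u := inv_pos.mpr hm
  have hmu : m * u = 1 := mul_inv_cancel₀ hm.ne'
  have hkinv : 0 < κ⁻¹ := inv_pos.mpr hκ0
  have hu2 : u ≤ κ⁻¹^2 := by
    rw [hudef]
    calc m⁻¹ ≤ (κ^2)⁻¹ := inv_anti₀ (by positivity) hm1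
      _ = κ⁻¹^2 := by rw [← inv_pow]
  have hA0 : 0 ≤ A := norm_nonneg _
  have hS0 : ∀ μ, 0 ≤ S μ := fun μ => norm_nonneg _
  have hT0 : 0 ≤ T := Finset.sum_nonneg fun μ _ => hS0 μ
  have hc : |c| = u^2 * (2 * |β ν|) := by
    rw [hcdef, abs_mul, abs_neg, abs_inv, abs_of_pos (by positivity : (0:ℝ) < m^2),
      abs_mul, abs_mink_single, abs_two, hudef, inv_pow]
  have hc0 : 0 ≤ |c| := abs_nonneg c
  have hc' : |c| ≤ 2 * κ⁻¹ * u := by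
    rw [hc]
    calc u^2*(2*|β ν|) ≤ u^2*(2*(κ⁻¹*m)) :=
          mul_le_mul_of_nonneg_left
            (mul_le_mul_of_nonneg_left (hb ν) (by norm_num)) (sq_nonneg u)
      _ = 2*κ⁻¹*u*(m*u) := by ring
      _ = 2*κ⁻¹*u := by rw [hmu, mul_one]
  have hB : ‖fderiv ℝ Ξ (iota β) β‖ ≤ κ⁻¹ * m * T := by
    refine (norm_fderiv_vec β (iota β)).trans ?_
    rw [hTdef, Finset.mul_sum]
    exact Finset.sum_le_sum fun μ _ => mul_le_mul_of_nonneg_right (hb μ) (hS0 μ)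
  have hmT0 : 0 ≤ κ⁻¹ * m * T := mul_nonneg (mul_nonneg hkinv.le hm.le) hT0
  have hX : ‖fderiv ℝ Ξ (iota β) (u • (Pi.single ν 1 : E4) + c • β)‖
      ≤ u * S ν + |c| * (κ⁻¹ * m * T) := by
    rw [map_add, map_smul, map_smul]
    refine (norm_add_le _ _).trans ?_
    rw [norm_smul, norm_smul, Real.norm_eq_abs, Real.norm_eq_abs, abs_of_pos hu0]
    have e1 : ‖fderiv ℝ Ξ (iota β) (Pi.single ν 1)‖ = S ν := by
      simp only [hSdef, pd]
    rw [e1]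
    exact add_le_add le_rfl (mul_le_mul_of_nonneg_left hB hc0)
  have h1 : u * (u * S ν) ≤ κ⁻¹^4 * S ν := by
    have huu : u * u ≤ κ⁻¹^2 * κ⁻¹^2 := mul_le_mul hu2 hu2 hu0.le (by positivity)
    calc u * (u * S ν) = (u*u) * S ν := by ring
      _ ≤ (κ⁻¹^2*κ⁻¹^2) * S ν := mul_le_mul_of_nonneg_right huu (hS0 ν)
      _ = κ⁻¹^4 * S ν := by ring
  have h2 : u * (|c| * (κ⁻¹ * m * T)) ≤ 2 * κ⁻¹^4 * T := by
    have step : u * (|c| * (κ⁻¹*m*T)) ≤ u * ((2*κ⁻¹*u) * (κ⁻¹*m*T)) :=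
      mul_le_mul_of_nonneg_left (mul_le_mul_of_nonneg_right hc' hmT0) hu0.le
    calc u * (|c| * (κ⁻¹*m*T)) ≤ u * ((2*κ⁻¹*u) * (κ⁻¹*m*T)) := step
      _ = 2*κ⁻¹^2*(u*T)*(m*u) := by ring
      _ = 2*κ⁻¹^2*(u*T) := by rw [hmu, mul_one]
      _ ≤ 2*κ⁻¹^2*(κ⁻¹^2*T) :=
          mul_le_mul_of_nonneg_left (mul_le_mul_of_nonneg_right hu2 hT0)
            (by positivity)
      _ = 2*κ⁻¹^4*T := by ring
  have h3 : |c| * A ≤ 2*κ⁻¹^3*A := by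
    calc |c| * A ≤ (2*κ⁻¹*u) * A := mul_le_mul_of_nonneg_right hc' hA0
      _ ≤ (2*κ⁻¹*(κ⁻¹^2)) * A :=
          mul_le_mul_of_nonneg_right
            (mul_le_mul_of_nonneg_left hu2 (by positivity)) hA0
      _ = 2*κ⁻¹^3*A := by ring
  calc ‖u • (fderiv ℝ Ξ (iota β) (u • (Pi.single ν 1 : E4) + c • β)) + c • Ξ (iota β)‖
      ≤ ‖u • (fderiv ℝ Ξ (iota β) (u • (Pi.single ν 1 : E4) + c • β))‖ + ‖c • Ξ (iota β)‖ :=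
        norm_add_le _ _
    _ ≤ u * (u * S ν + |c| * (κ⁻¹ * m * T)) + |c| * A := by
        rw [norm_smul, norm_smul, Real.norm_eq_abs, Real.norm_eq_abs, abs_of_pos hu0]
        exact add_le_add (mul_le_mul_of_nonneg_left hX hu0.le) le_rfl
    _ = u * (u * S ν) + u * (|c| * (κ⁻¹ * m * T)) + |c| * A := by ring
    _ ≤ κ⁻¹^4 * S ν + 2 * κ⁻¹^4 * T + 2 * κ⁻¹^3 * A := by linarith
    _ = 2 * κ⁻¹^3 * A + κ⁻¹^4 * S ν + 2 * κ⁻¹^4 * T := by ring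

lemma continuous_minkq : Continuous fun x : E4 => mink x x := by
  simp only [mink]
  fun_prop

lemma isOpen_Vplus : IsOpen Vplus := by
  have : Vplus = {x : E4 | 0 < x 0} ∩ {x | 0 < mink x x} := rfl
  rw [this]
  exact (isOpen_lt continuous_const (continuous_apply 0)).inter
    (isOpen_lt continuous_const continuous_minkq)

lemma Bk_subset_Vplus {κ : ℝ} (hκ0 : 0 < κ) : Bk κ ⊆ Vplus := fun β hβ =>
  ⟨lt_of_lt_of_le hκ0 (mem_Bk.mp hβ).1, mink_pos_of_mem hκ0 hβ⟩

lemma isCompact_Bk {κ : ℝ} (hκ0 : 0 < κ) : IsCompact (Bk κ) := by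
  have hclosed : IsClosed (Bk κ) := by
    have heq : Bk κ = {β : E4 | κ ≤ β 0} ∩ ({β | 0 ≤ mink β β - 2*κ*β 0 + κ^2} ∩
        ({β | β 0 ≤ κ⁻¹} ∩ {β | 0 ≤ κ⁻¹^2 - 2*κ⁻¹*β 0 + mink β β})) := by
      ext β
      simp only [mem_Bk, Set.mem_inter_iff, Set.mem_setOf_eq]
    rw [heq]
    have c1 : Continuous fun β : E4 => mink β β - 2*κ*β 0 + κ^2 :=
      (continuous_minkq.sub (continuous_const.mul (continuous_apply 0))).add continuous_const
    have c2 : Continuous fun β : E4 => κ⁻¹^2 - 2*κ⁻¹*β 0 + mink β β :=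
      (continuous_const.sub (continuous_const.mul (continuous_apply 0))).add continuous_minkq
    exact (isClosed_le continuous_const (continuous_apply 0)).inter
      ((isClosed_le continuous_const c1).inter
        ((isClosed_le (continuous_apply 0) continuous_const).inter
          (isClosed_le continuous_const c2)))
  have hsub : Bk κ ⊆ Metric.closedBall (0 : E4) κ⁻¹ := by
    intro β hβ
    rw [Metric.mem_closedBall, dist_zero_right]
    rw [pi_norm_le_iff_of_nonneg (inv_pos.mpr hκ0).le]
    intro i
    rw [Real.norm_eq_abs]
    exact (Bk_bounds hκ0 hβ).2.2.2 i
  exact (isCompact_closedBall (0:E4) κ⁻¹).of_isClosed_subset hclosed hsub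

lemma e0_mem_Bk {κ : ℝ} (hκ0 : 0 < κ) (hκ1 : κ < 1) : e0 ∈ Bk κ := by
  rw [mem_Bk]
  have h0 : e0 0 = 1 := by simp [e0]
  have hmk : mink e0 e0 = 1 := by
    simp [mink, e0, Pi.single_apply, show ((1:Fin 4)=0) = False by decide,
      show ((2:Fin 4)=0) = False by decide, show ((3:Fin 4)=0) = False by decide]
  rw [h0, hmk]
  have hki : κ * κ⁻¹ = 1 := mul_inv_cancel₀ hκ0.ne'
  have hkinv : 0 < κ⁻¹ := inv_pos.mpr hκ0
  have h1 : 1 ≤ κ⁻¹ := by nlinarith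
  exact ⟨hκ1.le, by nlinarith, h1, by nlinarith [sq_nonneg (κ⁻¹ - 1)]⟩

lemma bddAbove_norm_on {K : Set E4} (hK : IsCompact K) {f : E4 → ℂ}
    (hf : ContinuousOn f K) : BddAbove (Set.range fun β : K => ‖f ↑β‖) := by
  have heq : (Set.range fun β : K => ‖f ↑β‖) = (fun x => ‖f x‖) '' K :=
    (Set.image_eq_range (fun x => ‖f x‖) K).symm
  rw [heq]
  exact (hK.image_of_continuousOn hf.norm).bddAbove

end ImapAux

open ImapAux in
/-- (i) ι maps B_κ into itself; (ii) continuity of I and of its first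
partial derivatives with respect to the seminorms ‖·‖_{B_κ}. -/
theorem Imap_seminorm_bounds (κ : ℝ) (hκ0 : 0 < κ) (hκ1 : κ < 1) :
    (iota '' Bk κ ⊆ Bk κ) ∧
    ∀ Ξ : (Fin 4 → ℝ) → ℂ, ContDiffOn ℝ (⊤ : ℕ∞) Ξ Vplus →
      supOn (Bk κ) (Imap Ξ) ≤ κ⁻¹ ^ 2 * supOn (Bk κ) Ξ ∧
      ∀ ν : Fin 4,
        supOn (Bk κ) (pd ν (Imap Ξ)) ≤
          2 * κ⁻¹ ^ 3 * supOn (Bk κ) Ξ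
            + 3 * κ⁻¹ ^ 4 * ∑ ν' : Fin 4, supOn (Bk κ) (pd ν' Ξ) := by
  refine ⟨?_, ?_⟩
  · rintro x ⟨β, hβ, rfl⟩
    exact iota_mem_Bk hκ0 hβ
  · intro Ξ hΞ
    haveI : Nonempty (Bk κ) := ⟨⟨e0, e0_mem_Bk hκ0 hκ1⟩⟩
    have hK : IsCompact (Bk κ) := isCompact_Bk hκ0
    have hsub : Bk κ ⊆ Vplus := Bk_subset_Vplus hκ0
    have hdiff : ∀ x ∈ Vplus, DifferentiableAt ℝ Ξ x := fun x hx =>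
      (hΞ.differentiableOn (by simp)).differentiableAt (isOpen_Vplus.mem_nhds hx)
    have hbddΞ : BddAbove (Set.range fun β : Bk κ => ‖Ξ ↑β‖) :=
      bddAbove_norm_on hK (hΞ.continuousOn.mono hsub)
    have hfd : ContinuousOn (fderiv ℝ Ξ) Vplus :=
      hΞ.continuousOn_fderiv_of_isOpen isOpen_Vplus (by simp)
    have hbddpd : ∀ μ : Fin 4, BddAbove (Set.range fun β : Bk κ => ‖pd μ Ξ ↑β‖) := by
      intro μ
      apply bddAbove_norm_on hK
      exact (ContinuousLinearMap.apply ℝ ℂ ((Pi.single μ 1 : Fin 4 → ℝ))).continuous.comp_continuousOn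
        (hfd.mono hsub)
    have hN0 : 0 ≤ supOn (Bk κ) Ξ := Real.iSup_nonneg fun β => norm_nonneg _
    have hsup_nonneg : ∀ μ : Fin 4, 0 ≤ supOn (Bk κ) (pd μ Ξ) := fun μ =>
      Real.iSup_nonneg fun b => norm_nonneg _
    constructor
    · refine ciSup_le fun b => ?_
      obtain ⟨β, hβ⟩ := b
      have hm := mink_pos_of_mem hκ0 hβ
      have hι := iota_mem_Bk hκ0 hβ
      have hu2 : (mink β β)⁻¹ ≤ κ⁻¹^2 := by
        calc (mink β β)⁻¹ ≤ (κ^2)⁻¹ := inv_anti₀ (by positivity) (Bk_bounds hκ0 hβ).1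
          _ = κ⁻¹^2 := by rw [← inv_pow]
      calc ‖Imap Ξ β‖ = (mink β β)⁻¹ * ‖Ξ (iota β)‖ := by
            rw [Imap, norm_smul, Real.norm_eq_abs, abs_of_pos (inv_pos.mpr hm)]
        _ ≤ κ⁻¹^2 * supOn (Bk κ) Ξ :=
            mul_le_mul hu2 (le_ciSup hbddΞ ⟨iota β, hι⟩) (norm_nonneg _) (by positivity)
    · intro ν
      refine ciSup_le fun b => ?_
      obtain ⟨β, hβ⟩ := b
      have hι := iota_mem_Bk hκ0 hβ
      have hpt := pd_Imap_pointwise hκ0 hβ (hdiff _ (hsub hι)) ν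
      have hΞb : ‖Ξ (iota β)‖ ≤ supOn (Bk κ) Ξ := le_ciSup hbddΞ ⟨iota β, hι⟩
      have hpdb : ∀ μ : Fin 4, ‖pd μ Ξ (iota β)‖ ≤ supOn (Bk κ) (pd μ Ξ) := fun μ =>
        le_ciSup (hbddpd μ) ⟨iota β, hι⟩
      have hsum : ∑ μ : Fin 4, ‖pd μ Ξ (iota β)‖ ≤ ∑ μ : Fin 4, supOn (Bk κ) (pd μ Ξ) :=
        Finset.sum_le_sum fun μ _ => hpdb μ
      have hone : supOn (Bk κ) (pd ν Ξ) ≤ ∑ μ : Fin 4, supOn (Bk κ) (pd μ Ξ) :=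
        Finset.single_le_sum (fun μ _ => hsup_nonneg μ) (Finset.mem_univ ν)
      have e1 := mul_le_mul_of_nonneg_left hΞb (by positivity : (0:ℝ) ≤ 2*κ⁻¹^3)
      have e2 := mul_le_mul_of_nonneg_left ((hpdb ν).trans hone)
        (by positivity : (0:ℝ) ≤ κ⁻¹^4)
      have e3 := mul_le_mul_of_nonneg_left hsum (by positivity : (0:ℝ) ≤ 2*κ⁻¹^4)
      calc ‖pd ν (Imap Ξ) β‖ ≤ 2 * κ⁻¹^3 * ‖Ξ (iota β)‖ + κ⁻¹^4 * ‖pd ν Ξ (iota β)‖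
            + 2 * κ⁻¹^4 * ∑ μ : Fin 4, ‖pd μ Ξ (iota β)‖ := hpt
        _ ≤ 2 * κ⁻¹ ^ 3 * supOn (Bk κ) Ξ
            + 3 * κ⁻¹ ^ 4 * ∑ ν' : Fin 4, supOn (Bk κ) (pd ν' Ξ) := by linarith
end
end

section
/- Let K be a compact subset of the open right half-plane {z ∈ ℂ : Re z > 0} and let ε > 0. Then for each choice of sign there exists a polynomial q with complex coefficients such that sup_{z ∈ K} |e^{±iz} − q(z²)| < ε. In other words, e^{±iz} can be uniformly approximated on K by polynomials in z containing only even powers of z. -/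
/-!
Since `e^{±iz}` is entire, it suffices to approximate `z` itself on `K` by polynomials in `z²`,
i.e. the principal square root on `{z² | z ∈ K}`; composing with Taylor polynomials of the
exponential then does the rest. The square root is reached by continuation along
`w_t = 1 + t (z² - 1)`, `0 ≤ t ≤ 1`, which stays in the slit plane. Compactness gives
`Re √w_t ≥ δ > 0`, so `√w_t` depends Lipschitz-continuously on `t`, and the iteration
`p ↦ p + (w_t - p²) / (2c)` contracts towards `√w_t` as soon as `p` is within `δ / 2` of it.
A good approximation at `t` is therefore a valid starting point at every nearby `t'`.
-/

open Complex Set Polynomial Metric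

/-- Newton's method for `√(s²)` with the derivative `2p` frozen at a constant `2c`, so that
the step is affine in `s²` and keeps polynomials polynomial. -/
lemma norm_newton_sqrt_sub_le {s p : ℂ} {c δ B : ℝ} (hδ : 0 < δ) (hs : δ ≤ s.re)
    (hsB : ‖s‖ ≤ B) (hc : B ^ 2 ≤ c * δ) (hp : ‖p - s‖ ≤ δ / 2) :
    ‖p + (s ^ 2 - p ^ 2) / (2 * c) - s‖ ≤ (1 - δ / (4 * c)) * ‖p - s‖ := by
  have hδB : δ ≤ B := hs.trans ((re_le_norm s).trans hsB)
  have hδc : δ ≤ c := le_of_mul_le_mul_right (by nlinarith) hδ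
  have hc0 : 0 < c := hδ.trans_le hδc
  have hcs : ‖(c : ℂ) - s‖ ≤ c - δ / 2 := by
    have hsq : ‖s‖ ^ 2 = s.re ^ 2 + s.im ^ 2 := by rw [Complex.sq_norm, normSq_apply]; ring
    have hcsq : ‖(c : ℂ) - s‖ ^ 2 = (c - s.re) ^ 2 + s.im ^ 2 := by
      rw [Complex.sq_norm, normSq_apply]; simp; ring
    apply abs_le_of_sq_le_sq' _ (by linarith) |>.2
    nlinarith [norm_nonneg s]
  have hfactor : p + (s ^ 2 - p ^ 2) / (2 * c) - s
      = (p - s) * ((c - s) / c - (p - s) / (2 * c)) := by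
    have : (c : ℂ) ≠ 0 := ofReal_ne_zero.mpr hc0.ne'
    field_simp; ring
  rw [hfactor, norm_mul, mul_comm]
  gcongr
  calc ‖(c - s) / c - (p - s) / (2 * c)‖ ≤ ‖((c : ℂ) - s) / c‖ + ‖(p - s) / (2 * c)‖ :=
        norm_sub_le _ _
    _ ≤ (c - δ / 2) / c + (δ / 2) / (2 * c) := by
      simp only [norm_div, norm_mul, norm_real, Real.norm_eq_abs, abs_of_pos hc0,
        RCLike.norm_ofNat]
      gcongr
    _ = 1 - δ / (4 * c) := by field_simp; ring

theorem Differentiable.exists_polynomial_near {f : ℂ → ℂ} (hf : Differentiable ℂ f) (R : ℝ)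
    {ε : ℝ} (hε : 0 < ε) : ∃ P : ℂ[X], ∀ w ∈ closedBall (0 : ℂ) R, ‖P.eval w - f w‖ < ε := by
  have hp := hf.hasFPowerSeriesOnBall 0 one_pos
  have hR : ((R.toNNReal + 1 : NNReal) : ENNReal) < ⊤ := ENNReal.coe_lt_top
  obtain ⟨n, hn⟩ := (Metric.tendstoUniformlyOn_iff.mp (hp.tendstoUniformlyOn hR) ε hε).exists
  refine ⟨∑ i ∈ Finset.range n, C ((cauchyPowerSeries f 0 1).coeff i) * X ^ i, fun w hw => ?_⟩
  have hw' : w ∈ ball (0 : ℂ) (R.toNNReal + 1 : NNReal) := by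
    rw [mem_closedBall, dist_zero_right] at hw
    rw [mem_ball, dist_zero_right]
    push_cast
    linarith [R.le_coe_toNNReal]
  have := hn w hw'
  rw [zero_add, dist_comm, dist_eq_norm, FormalMultilinearSeries.partialSum] at this
  simp only [FormalMultilinearSeries.apply_eq_pow_smul_coeff, smul_eq_mul, NNReal.coe_one] at this
  simpa only [eval_finsetSum, eval_mul, eval_C, eval_pow, eval_X, mul_comm] using this

theorem exists_polynomial_eq_eval_of_mem_adjoin_singleton {α R : Type*} [CommSemiring R]
    {φ g : α → R} (hg : g ∈ Algebra.adjoin R {φ}) : ∃ q : R[X], ∀ x, g x = q.eval (φ x) := by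
  rw [Algebra.adjoin_singleton_eq_range_aeval] at hg
  obtain ⟨q, rfl⟩ := hg
  exact ⟨q, fun x => by simp⟩

lemma Complex.sq_mem_slitPlane {z : ℂ} (hz : 0 < z.re) : z ^ 2 ∈ slitPlane := by
  rw [mem_slitPlane_iff, sq, mul_re, mul_im]
  by_cases him : z.im = 0
  · left; simp [him, hz]
  · right
    have : z.re * z.im ≠ 0 := mul_ne_zero hz.ne' him
    contrapose! this
    linarith

lemma Complex.re_sqrt_pos {v : ℂ} (hv : v ∈ slitPlane) : 0 < v.sqrt.re := by
  rw [Complex.sqrt, cpow_inv_two_re, Real.sqrt_pos]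
  rcases mem_slitPlane_iff.mp hv with hre | him
  · linarith [norm_nonneg v]
  · linarith [neg_abs_le v.re, abs_re_lt_norm.mpr him]

lemma norm_sub_mul_re_add_le (s s' : ℂ) : ‖s - s'‖ * (s + s').re ≤ ‖s ^ 2 - s' ^ 2‖ := by
  rw [show s ^ 2 - s' ^ 2 = (s - s') * (s + s') by ring, norm_mul]
  exact mul_le_mul_of_nonneg_left (re_le_norm _) (norm_nonneg _)

section Approximation

variable {α : Type*} (A : Subalgebra ℂ (α → ℂ)) (K : Set α)

def UniformlyApproximableOn (f : α → ℂ) : Prop :=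
  ∀ ε > 0, ∃ g ∈ A, ∀ x ∈ K, ‖g x - f x‖ < ε

variable {A K}

theorem UniformlyApproximableOn.congr {f f' : α → ℂ} (hf : UniformlyApproximableOn A K f)
    (hff' : EqOn f f' K) : UniformlyApproximableOn A K f' := by
  intro ε hε
  obtain ⟨g, hgA, hg⟩ := hf ε hε
  exact ⟨g, hgA, fun x hx => hff' hx ▸ hg x hx⟩

theorem UniformlyApproximableOn.of_sq_mem_of_near {s v : α → ℂ} {δ B : ℝ} (hδ : 0 < δ)
    (hv : v ∈ A) (hsq : ∀ x ∈ K, s x ^ 2 = v x) (hre : ∀ x ∈ K, δ ≤ (s x).re)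
    (hB : ∀ x ∈ K, ‖s x‖ ≤ B) (hnear : ∃ p ∈ A, ∀ x ∈ K, ‖p x - s x‖ ≤ δ / 2) :
    UniformlyApproximableOn A K s := by
  set c := B ^ 2 / δ + δ
  have hδc : δ ≤ c := le_add_of_nonneg_left (by positivity)
  have hc : B ^ 2 ≤ c * δ := by
    have : c * δ = B ^ 2 + δ ^ 2 := by simp only [c]; field_simp
    nlinarith
  set ρ := 1 - δ / (4 * c)
  have hρ0 : 0 ≤ ρ := by
    have : δ / (4 * c) ≤ 1 := (div_le_one (by linarith)).mpr (by linarith)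
    linarith
  have hρ1 : ρ < 1 := by
    have : 0 < δ / (4 * c) := div_pos hδ (by linarith)
    linarith
  have hiter (n : ℕ) : ∃ p ∈ A, ∀ x ∈ K, ‖p x - s x‖ ≤ ρ ^ n * (δ / 2) := by
    induction n with
    | zero => simpa using hnear
    | succ n ih =>
      obtain ⟨p, hpA, hp⟩ := ih
      refine ⟨p + (2 * c : ℂ)⁻¹ • (v - p ^ 2), add_mem hpA (A.smul_mem (sub_mem hv
        (pow_mem hpA 2)) _), fun x hx => ?_⟩
      have hpx : ‖p x - s x‖ ≤ δ / 2 :=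
        (hp x hx).trans (mul_le_of_le_one_left (by positivity) (pow_le_one₀ hρ0 hρ1.le))
      simp only [Pi.add_apply, Pi.smul_apply, Pi.sub_apply, Pi.pow_apply, smul_eq_mul,
        ← hsq x hx, inv_mul_eq_div]
      refine (norm_newton_sqrt_sub_le hδ (hre x hx) (hB x hx) hc hpx).trans ?_
      rw [pow_succ', mul_assoc]
      exact mul_le_mul_of_nonneg_left (hp x hx) hρ0
  intro ε hε
  obtain ⟨n, hn⟩ := exists_pow_lt_of_lt_one (div_pos hε (half_pos hδ)) hρ1
  obtain ⟨p, hpA, hp⟩ := hiter n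
  exact ⟨p, hpA, fun x hx => (hp x hx).trans_lt ((lt_div_iff₀ (half_pos hδ)).mp hn)⟩

theorem UniformlyApproximableOn.of_sq_mem_along_path {s v : ℝ → α → ℂ} {δ B L : ℝ}
    (h0 : UniformlyApproximableOn A K (s 0)) (hδ : 0 < δ) (hv : ∀ t ∈ Icc (0 : ℝ) 1, v t ∈ A)
    (hsq : ∀ t ∈ Icc (0 : ℝ) 1, ∀ x ∈ K, s t x ^ 2 = v t x)
    (hre : ∀ t ∈ Icc (0 : ℝ) 1, ∀ x ∈ K, δ ≤ (s t x).re)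
    (hB : ∀ t ∈ Icc (0 : ℝ) 1, ∀ x ∈ K, ‖s t x‖ ≤ B)
    (hL : ∀ t ∈ Icc (0 : ℝ) 1, ∀ t' ∈ Icc (0 : ℝ) 1, ∀ x ∈ K, ‖s t x - s t' x‖ ≤ L * |t - t'|) :
    UniformlyApproximableOn A K (s 1) := by
  obtain ⟨N, hN⟩ := exists_nat_gt (4 * L / δ)
  set h : ℝ := 1 / (N + 1)
  have hh : 0 < h := by positivity
  have hLh : ∀ d, 0 ≤ d → d ≤ h → L * d ≤ δ / 4 := by
    intro d hd0 hdh
    have : L * h ≤ δ / 4 := by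
      rw [div_lt_iff₀ hδ] at hN
      simp only [h, mul_one_div, div_le_div_iff₀ (by positivity : (0 : ℝ) < N + 1) four_pos]
      nlinarith
    rcases le_or_gt 0 L with hL0 | hL0 <;> nlinarith
  have key (n : ℕ) : ∀ t ∈ Icc (0 : ℝ) 1, t ≤ n * h → UniformlyApproximableOn A K (s t) := by
    induction n with
    | zero =>
      intro t ht htn
      rwa [le_antisymm (by simpa using htn) ht.1]
    | succ n ih =>
      intro t ht htn
      set t' := max 0 (t - h)
      have ht't : t' ≤ t := max_le ht.1 (by linarith)
      have htt' : t - h ≤ t' := le_max_right _ _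
      have ht' : t' ∈ Icc (0 : ℝ) 1 := ⟨le_max_left _ _, ht't.trans ht.2⟩
      have ht'n : t' ≤ n * h := max_le (by positivity) (by push_cast at htn; linarith)
      refine .of_sq_mem_of_near hδ (hv t ht) (hsq t ht) (hre t ht) (hB t ht) ?_
      obtain ⟨g, hgA, hg⟩ := ih t' ht' ht'n (δ / 4) (by positivity)
      refine ⟨g, hgA, fun x hx => ?_⟩
      have hdrift : ‖s t' x - s t x‖ ≤ δ / 4 :=
        (hL t' ht' t ht x hx).trans
          (hLh _ (abs_nonneg _) (abs_sub_le_iff.2 ⟨by linarith, by linarith⟩))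
      calc ‖g x - s t x‖ ≤ ‖g x - s t' x‖ + ‖s t' x - s t x‖ :=
            norm_sub_le_norm_sub_add_norm_sub _ _ _
        _ ≤ δ / 4 + δ / 4 := add_le_add (hg x hx).le hdrift
        _ = δ / 2 := by ring
  exact key (N + 1) 1 ⟨zero_le_one, le_rfl⟩
    (by rw [Nat.cast_succ, mul_one_div_cancel (by positivity)])

theorem UniformlyApproximableOn.differentiable_comp {f : ℂ → ℂ} {g : α → ℂ} {R : ℝ}
    (hg : UniformlyApproximableOn A K g) (hgR : ∀ x ∈ K, ‖g x‖ ≤ R) (hf : Differentiable ℂ f) :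
    UniformlyApproximableOn A K (f ∘ g) := by
  intro ε hε
  obtain ⟨η, hη, hfη⟩ := Metric.uniformContinuousOn_iff.mp
    ((isCompact_closedBall (0 : ℂ) (R + 1)).uniformContinuousOn_of_continuous
      hf.continuous.continuousOn) (ε / 2) (half_pos hε)
  obtain ⟨q, hqA, hq⟩ := hg (min η 1) (lt_min hη one_pos)
  obtain ⟨P, hP⟩ := hf.exists_polynomial_near (R + 1) (half_pos hε)
  refine ⟨aeval q P, Algebra.adjoin_le (singleton_subset_iff.mpr hqA)
    (aeval_mem_adjoin_singleton ℂ q), fun x hx => ?_⟩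
  have hqg : ‖q x - g x‖ < min η 1 := hq x hx
  have hgx : g x ∈ closedBall (0 : ℂ) (R + 1) := by
    rw [mem_closedBall, dist_zero_right]; linarith [hgR x hx]
  have hqx : q x ∈ closedBall (0 : ℂ) (R + 1) := by
    rw [mem_closedBall, dist_zero_right]
    linarith [norm_le_norm_add_norm_sub' (q x) (g x), hgR x hx, min_le_right η 1]
  rw [aeval_pi_apply₂, coe_aeval_eq_eval, Function.comp_apply]
  calc ‖P.eval (q x) - f (g x)‖ ≤ ‖P.eval (q x) - f (q x)‖ + ‖f (q x) - f (g x)‖ :=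
        norm_sub_le_norm_sub_add_norm_sub _ _ _
    _ < ε / 2 + ε / 2 := by
      gcongr
      · exact hP _ hqx
      · rw [← dist_eq_norm]
        exact hfη _ hqx _ hgx (by rw [dist_eq_norm]; exact hqg.trans_le (min_le_left _ _))
    _ = ε := add_halves ε

end Approximation

theorem uniformlyApproximableOn_id_adjoin_sq {K : Set ℂ} (hK : IsCompact K)
    (hKre : ∀ z ∈ K, 0 < z.re) :
    UniformlyApproximableOn (Algebra.adjoin ℂ {fun z : ℂ => z ^ 2}) K id := by
  set A := Algebra.adjoin ℂ {fun z : ℂ => z ^ 2}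
  set v : ℝ → ℂ → ℂ := fun t z => 1 + t * (z ^ 2 - 1)
  set s : ℝ → ℂ → ℂ := fun t z => (v t z).sqrt
  have hvA (t : ℝ) : v t ∈ A := by
    have hφ : (fun z : ℂ => z ^ 2) ∈ A := Algebra.subset_adjoin rfl
    have : v t = 1 + (t : ℂ) • ((fun z : ℂ => z ^ 2) - 1) := by
      ext z; simp [v]
    rw [this]
    exact add_mem (one_mem A) (A.smul_mem (sub_mem hφ (one_mem A)) _)
  have hslit : ∀ p ∈ Icc (0 : ℝ) 1 ×ˢ K, v p.1 p.2 ∈ slitPlane := by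
    rintro ⟨t, z⟩ ⟨ht, hz⟩
    simpa [v, real_smul] using starConvex_one_slitPlane.add_smul_mem
      (by simpa using sq_mem_slitPlane (hKre z hz)) ht.1 ht.2
  have hcont : ContinuousOn (fun p : ℝ × ℂ => s p.1 p.2) (Icc (0 : ℝ) 1 ×ˢ K) :=
    continuousOn_sqrt.comp (by fun_prop) hslit
  have hcpt : IsCompact (Icc (0 : ℝ) 1 ×ˢ K) := isCompact_Icc.prod hK
  obtain ⟨δ, hδ, hre⟩ := hcpt.exists_forall_le' (continuous_re.comp_continuousOn hcont)
    (fun p hp => re_sqrt_pos (hslit p hp))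
  replace hre : ∀ t ∈ Icc (0 : ℝ) 1, ∀ z ∈ K, δ ≤ (s t z).re :=
    fun t ht z hz => hre (t, z) ⟨ht, hz⟩
  obtain ⟨B, hB⟩ := hcpt.exists_bound_of_continuousOn hcont
  obtain ⟨M, hM⟩ := hK.exists_bound_of_continuousOn (f := fun z : ℂ => z ^ 2 - 1) (by fun_prop)
  have hsq (t : ℝ) (z : ℂ) : s t z ^ 2 = v t z := by simp [s, Complex.sqrt]
  have hlip : ∀ t ∈ Icc (0 : ℝ) 1, ∀ t' ∈ Icc (0 : ℝ) 1, ∀ z ∈ K,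
      ‖s t z - s t' z‖ ≤ M / (2 * δ) * |t - t'| := by
    intro t ht t' ht' z hz
    rw [div_mul_eq_mul_div, le_div_iff₀ (by positivity)]
    calc ‖s t z - s t' z‖ * (2 * δ) ≤ ‖s t z - s t' z‖ * (s t z + s t' z).re := by
          gcongr
          rw [add_re]
          linarith [hre t ht z hz, hre t' ht' z hz]
      _ ≤ ‖s t z ^ 2 - s t' z ^ 2‖ := norm_sub_mul_re_add_le _ _
      _ = |t - t'| * ‖z ^ 2 - 1‖ := by
          rw [hsq, hsq, show v t z - v t' z = ((t - t' : ℝ) : ℂ) * (z ^ 2 - 1) by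
            simp only [v]; push_cast; ring, norm_mul, norm_real, Real.norm_eq_abs]
      _ ≤ M * |t - t'| := by rw [mul_comm]; gcongr; exact hM z hz
  have h0 : UniformlyApproximableOn A K (s 0) := fun ε hε =>
    ⟨1, one_mem A, fun z _ => by simpa [s, v] using hε⟩
  refine (h0.of_sq_mem_along_path hδ (fun t _ => hvA t) (fun t _ z _ => hsq t z)
    hre (fun t ht z hz => hB (t, z) ⟨ht, hz⟩) hlip).congr fun z hz => ?_
  simpa [s, v, Complex.sqrt] using sq_cpow_two_inv (hKre z hz)

theorem exp_approx_by_even_polynomials_general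
    (K : Set ℂ) (hK : IsCompact K) (hKre : ∀ z ∈ K, 0 < z.re)
    (ε : ℝ) (hε : 0 < ε) (σ : ℝ) :
    ∃ q : Polynomial ℂ,
      (⨆ z : K, ‖Complex.exp ((σ : ℂ) * Complex.I * (z : ℂ))
        - q.eval ((z : ℂ) ^ 2)‖) < ε := by
  obtain ⟨R, hR⟩ := hK.exists_bound_of_continuousOn (f := id) continuousOn_id
  have hexp : Differentiable ℂ fun z => exp (σ * I * z) := by fun_prop
  obtain ⟨g, hgA, hg⟩ := (uniformlyApproximableOn_id_adjoin_sq hK hKre).differentiable_comp hR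
    hexp (ε / 2) (half_pos hε)
  obtain ⟨q, hq⟩ := exists_polynomial_eq_eval_of_mem_adjoin_singleton hgA
  refine ⟨q, (Real.iSup_le (fun z => ?_) (half_pos hε).le).trans_lt (half_lt_self hε)⟩
  rw [norm_sub_rev, ← hq]
  exact (hg z z.2).le

/-- On a compact subset K of the open right half-plane, e^{±iz} can be
uniformly approximated by polynomials in z² (i.e. by polynomials in z
containing only even powers of z). -/
theorem exp_approx_by_even_polynomials
    (K : Set ℂ) (hK : IsCompact K) (hKre : ∀ z ∈ K, 0 < z.re)
    (ε : ℝ) (hε : 0 < ε) (σ : ℝ) (hσ : σ = 1 ∨ σ = -1) :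
    ∃ q : Polynomial ℂ,
      (⨆ z : K, ‖Complex.exp ((σ : ℂ) * Complex.I * (z : ℂ))
        - q.eval ((z : ℂ) ^ 2)‖) < ε :=
  exp_approx_by_even_polynomials_general K hK hKre ε hε σ
end

section
/- (Core of Lemma 5.1(c)) Let C(w) = Σ_{n≥0} (−1)ⁿ wⁿ/(2n)! and S(w) = Σ_{n≥0} (−1)ⁿ wⁿ/(2n+1)! (entire functions with C(t²) = cos t and t·S(t²) = sin t for real t). For k = (k₀,k₁,k₂,k₃) ∈ ℂ⁴ and β ∈ ℝ⁴ set P(k) = k₁² + k₂² + k₃² and E(k, β) = ( C(β₀² P(k)) + i k₀ β₀ S(β₀² P(k)) ) · exp(−i(k₁β₁ + k₂β₂ + k₃β₃)). Then: (i) for each fixed β ∈ ℝ⁴, the map k ↦ E(k, β) is entire analytic on ℂ⁴; (ii) for every real k of the form k = (|𝐤|, 𝐤) with 𝐤 ∈ ℝ³ one has E(k, β) = e^{i β·k}, where β·k is the Minkowski product; (iii) for every fixed k ∈ ℂ⁴, the map β ↦ E(k, β) is smooth on ℝ⁴ and satisfies the wave equation □_β E(k, β) = 0. -/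
noncomputable section

/-- The entire function C(w) = Σ_{n≥0} (−1)ⁿ wⁿ/(2n)! (so C(t²) = cos t). -/
def Cfun (w : ℂ) : ℂ := ∑' n : ℕ, (-1) ^ n * w ^ n / (Nat.factorial (2 * n) : ℂ)

/-- The entire function S(w) = Σ_{n≥0} (−1)ⁿ wⁿ/(2n+1)! (so t·S(t²) = sin t). -/
def Sfun (w : ℂ) : ℂ := ∑' n : ℕ, (-1) ^ n * w ^ n / (Nat.factorial (2 * n + 1) : ℂ)

/-- P(k) = k₁² + k₂² + k₃². -/
def Pquad (k : Fin 4 → ℂ) : ℂ := k 1 ^ 2 + k 2 ^ 2 + k 3 ^ 2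

/-- E(k, β) = (C(β₀²P(k)) + i k₀ β₀ S(β₀²P(k))) · e^{−i(k₁β₁ + k₂β₂ + k₃β₃)}. -/
def Efun (k : Fin 4 → ℂ) (β : Fin 4 → ℝ) : ℂ :=
  (Cfun ((β 0 : ℂ) ^ 2 * Pquad k)
      + Complex.I * k 0 * (β 0 : ℂ) * Sfun ((β 0 : ℂ) ^ 2 * Pquad k))
    * Complex.exp (-(Complex.I * (k 1 * (β 1 : ℂ) + k 2 * (β 2 : ℂ) + k 3 * (β 3 : ℂ))))

/-- The embedding of 𝐤 ∈ ℝ³ as the complexified lightlike vector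
k = (|𝐤|, 𝐤) ∈ ℂ⁴. -/
def lightC (K : EuclideanSpace ℝ (Fin 3)) : Fin 4 → ℂ :=
  Fin.cons (‖K‖ : ℂ) (fun i => (K i : ℂ))

/-- The real lightlike vector (|𝐤|, 𝐤) ∈ ℝ⁴. -/
def lightR (K : EuclideanSpace ℝ (Fin 3)) : Fin 4 → ℝ :=
  Fin.cons ‖K‖ (fun i => K i)
open Filter Complex ContinuousLinearMap

/-! ### Analyticity of the coefficient series -/

private def cC : ℕ → ℂ := fun n => (-1) ^ n / (Nat.factorial (2 * n) : ℂ)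
private def cS : ℕ → ℂ := fun n => (-1) ^ n / (Nat.factorial (2 * n + 1) : ℂ)

private lemma ratio_tendsto (f : ℕ → ℕ) (hf : ∀ n, n ≤ f n) (hs : ∀ n, f n + 1 ≤ f (n+1)) :
    Tendsto (fun n => ((Nat.factorial (f (n+1)) : ℝ))⁻¹ / ((Nat.factorial (f n) : ℝ))⁻¹)
      atTop (nhds 0) := by
  apply squeeze_zero (fun n => by positivity) (fun n => ?_) tendsto_one_div_add_atTop_nhds_zero_nat
  have key : (f n + 1) * Nat.factorial (f n) ≤ Nat.factorial (f (n+1)) := by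
    rw [← Nat.factorial_succ]; exact Nat.factorial_le (hs n)
  have h2 : ((f n : ℝ) + 1) * (Nat.factorial (f n) : ℝ) ≤ (Nat.factorial (f (n+1)) : ℝ) := by
    exact_mod_cast key
  have hB0 : (0:ℝ) < (Nat.factorial (f (n+1)) : ℝ) := by positivity
  have h1 : ((Nat.factorial (f (n+1)) : ℝ))⁻¹ / ((Nat.factorial (f n) : ℝ))⁻¹
      = (Nat.factorial (f n) : ℝ) / (Nat.factorial (f (n+1)) : ℝ) := by field_simp
  rw [h1, div_le_div_iff₀ hB0 (by positivity)]
  have h3 : ((n:ℝ) + 1) ≤ (f n : ℝ) + 1 := by exact_mod_cast Nat.succ_le_succ (hf n)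
  have hA0 : (0:ℝ) < (Nat.factorial (f n) : ℝ) := by positivity
  nlinarith

private lemma analyticAt_aux (g : ℕ → ℂ) (f : ℕ → ℕ)
    (hg : ∀ n, ‖g n‖ = ((Nat.factorial (f n) : ℝ))⁻¹)
    (hf : ∀ n, n ≤ f n) (hs : ∀ n, f n + 1 ≤ f (n+1)) (w : ℂ) :
    AnalyticAt ℂ (FormalMultilinearSeries.ofScalarsSum g) w := by
  have hrad : (FormalMultilinearSeries.ofScalars ℂ g).radius = ⊤ := by
    apply FormalMultilinearSeries.ofScalars_radius_eq_top_of_tendsto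
    · refine Eventually.of_forall fun n => ?_
      intro h
      have h1 := hg n
      rw [h, norm_zero] at h1
      have h2 : (0:ℝ) < ((Nat.factorial (f n) : ℝ))⁻¹ := by positivity
      rw [← h1] at h2; exact lt_irrefl _ h2
    · exact (ratio_tendsto f hf hs).congr fun n => by simp [hg]
  have h := (FormalMultilinearSeries.ofScalars ℂ g).hasFPowerSeriesOnBall
    (by rw [hrad]; exact ENNReal.zero_lt_top)
  rw [hrad] at h
  exact h.analyticOnNhd w (by simp [EMetric.mem_ball, edist_lt_top])

private lemma Cfun_eq : Cfun = FormalMultilinearSeries.ofScalarsSum cC := by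
  funext w
  rw [FormalMultilinearSeries.ofScalars_sum_eq, Cfun]
  exact tsum_congr fun n => by rw [smul_eq_mul, cC]; ring

private lemma Sfun_eq : Sfun = FormalMultilinearSeries.ofScalarsSum cS := by
  funext w
  rw [FormalMultilinearSeries.ofScalars_sum_eq, Sfun]
  exact tsum_congr fun n => by rw [smul_eq_mul, cS]; ring

lemma analyticAt_Cfun (w : ℂ) : AnalyticAt ℂ Cfun w := by
  rw [Cfun_eq]
  exact analyticAt_aux cC (fun n => 2 * n) (fun n => by simp [cC, norm_div])
    (fun n => by show n ≤ 2*n; omega) (fun n => by show 2*n+1 ≤ 2*(n+1); omega) w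

lemma analyticAt_Sfun (w : ℂ) : AnalyticAt ℂ Sfun w := by
  rw [Sfun_eq]
  exact analyticAt_aux cS (fun n => 2 * n + 1) (fun n => by simp [cS, norm_div])
    (fun n => by show n ≤ 2*n+1; omega) (fun n => by show 2*n+1+1 ≤ 2*(n+1)+1; omega) w

/-! ### Basic identities -/

lemma Cfun_sq (z : ℂ) : Cfun (z ^ 2) = Complex.cos z := by
  rw [Complex.cos_eq_tsum, Cfun]
  exact tsum_congr fun n => by rw [← pow_mul]

lemma Sfun_sq (z : ℂ) : z * Sfun (z ^ 2) = Complex.sin z := by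
  rw [Complex.sin_eq_tsum, Sfun, ← tsum_mul_left]
  exact tsum_congr fun n => by rw [← pow_mul, pow_succ]; ring

lemma Cfun_zero : Cfun 0 = 1 := by
  have := Cfun_sq 0
  simpa using this

lemma Sfun_zero : Sfun 0 = 1 := by
  rw [Sfun, tsum_eq_single 0 (fun n hn => by simp [zero_pow hn])]
  simp

/-! ### Linear forms on ℝ⁴ with complex coefficients -/

def lin4 (z : Fin 4 → ℂ) : (Fin 4 → ℝ) →L[ℝ] ℂ :=
  z 0 • (Complex.ofRealCLM.comp (ContinuousLinearMap.proj 0))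
    + z 1 • (Complex.ofRealCLM.comp (ContinuousLinearMap.proj 1))
    + z 2 • (Complex.ofRealCLM.comp (ContinuousLinearMap.proj 2))
    + z 3 • (Complex.ofRealCLM.comp (ContinuousLinearMap.proj 3))

lemma lin4_apply (z : Fin 4 → ℂ) (β : Fin 4 → ℝ) :
    lin4 z β = z 0 * (β 0 : ℂ) + z 1 * (β 1 : ℂ) + z 2 * (β 2 : ℂ) + z 3 * (β 3 : ℂ) := by
  simp [lin4, smul_eq_mul]

lemma lin4_single (z : Fin 4 → ℂ) (ν : Fin 4) : lin4 z (Pi.single ν 1) = z ν := by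
  fin_cases ν <;>
    simp [lin4, smul_eq_mul, Pi.single_apply]

private def projR (ν : Fin 4) : (Fin 4 → ℝ) →L[ℝ] ℝ := ContinuousLinearMap.proj ν

private lemma pd_main (g g' : ℝ → ℂ) (hg : ∀ t, HasDerivAt g (g' t) t)
    (c : ℂ) (z : Fin 4 → ℂ) (β : Fin 4 → ℝ) (ν : Fin 4) :
    pd ν (fun β : Fin 4 → ℝ => c * g (β 0) * Complex.exp (lin4 z β)) β
      = c * g' (β 0) * ((Pi.single ν (1:ℝ) : Fin 4 → ℝ) 0 : ℂ) * Complex.exp (lin4 z β)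
        + c * g (β 0) * z ν * Complex.exp (lin4 z β) := by
  have h1 : HasFDerivAt (fun β : Fin 4 → ℝ => g (β 0))
      ((ContinuousLinearMap.smulRight (1 : ℝ →L[ℝ] ℝ) (g' (β 0))).comp (projR 0)) β :=
    ((hg (β 0)).hasFDerivAt).comp β (projR 0).hasFDerivAt
  have h2 := (h1.const_mul c).mul ((lin4 z).hasFDerivAt.cexp)
  rw [pd, (show HasFDerivAt (fun β : Fin 4 → ℝ => c * g (β 0) * Complex.exp (lin4 z β)) _ β from h2).fderiv]
  simp [lin4_single, smul_eq_mul, projR]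
  ring

private lemma pdA (g g' : ℝ → ℂ) (hg : ∀ t, HasDerivAt g (g' t) t)
    (c : ℂ) (z : Fin 4 → ℂ) (hz : z 0 = 0) :
    pd 0 (fun β : Fin 4 → ℝ => c * g (β 0) * Complex.exp (lin4 z β))
      = fun β => c * g' (β 0) * Complex.exp (lin4 z β) := by
  funext β
  rw [pd_main g g' hg c z β 0]
  simp [hz]

private lemma pdB (g g' : ℝ → ℂ) (hg : ∀ t, HasDerivAt g (g' t) t)
    (c : ℂ) (z : Fin 4 → ℂ) (ν : Fin 4) (hν : ν ≠ 0) :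
    pd ν (fun β : Fin 4 → ℝ => c * g (β 0) * Complex.exp (lin4 z β))
      = fun β => c * z ν * g (β 0) * Complex.exp (lin4 z β) := by
  funext β
  rw [pd_main g g' hg c z β ν]
  rw [Pi.single_eq_of_ne (Ne.symm hν)]
  push_cast
  ring

private lemma box_main (g g' g'' : ℝ → ℂ) (hg : ∀ t, HasDerivAt g (g' t) t)
    (hg' : ∀ t, HasDerivAt g' (g'' t) t) (c : ℂ) (z : Fin 4 → ℂ) (hz : z 0 = 0) (β : Fin 4 → ℝ) :
    box (fun β : Fin 4 → ℝ => c * g (β 0) * Complex.exp (lin4 z β)) β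
      = (c * g'' (β 0) - (z 1 ^ 2 + z 2 ^ 2 + z 3 ^ 2) * (c * g (β 0)))
          * Complex.exp (lin4 z β) := by
  rw [box, pdA g g' hg c z hz, pdA g' g'' hg' c z hz,
    pdB g g' hg c z 1 (by decide), pdB g g' hg (c * z 1) z 1 (by decide),
    pdB g g' hg c z 2 (by decide), pdB g g' hg (c * z 2) z 2 (by decide),
    pdB g g' hg c z 3 (by decide), pdB g g' hg (c * z 3) z 3 (by decide)]
  ring

private def zk (k : Fin 4 → ℂ) : Fin 4 → ℂ :=
  ![0, -(Complex.I * k 1), -(Complex.I * k 2), -(Complex.I * k 3)]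

private def gk (k : Fin 4 → ℂ) : ℝ → ℂ := fun t =>
  Cfun ((t : ℂ) ^ 2 * Pquad k) + Complex.I * k 0 * (t : ℂ) * Sfun ((t : ℂ) ^ 2 * Pquad k)

private lemma Efun_decomp (k : Fin 4 → ℂ) :
    Efun k = fun β => (1 : ℂ) * gk k (β 0) * Complex.exp (lin4 (zk k) β) := by
  funext β
  show _ * _ = _
  rw [one_mul]
  congr 1
  rw [lin4_apply]
  simp only [zk, Matrix.cons_val_zero, Matrix.cons_val_one, Matrix.head_cons,
    Matrix.cons_val_two, Matrix.tail_cons, Matrix.cons_val_three]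
  ring

private lemma gk_props (k : Fin 4 → ℂ) :
    ContDiff ℝ (⊤ : ℕ∞) (gk k) ∧ ∃ g' g'' : ℝ → ℂ,
      (∀ t, HasDerivAt (gk k) (g' t) t) ∧ (∀ t, HasDerivAt g' (g'' t) t) ∧
        ∀ t, g'' t = -Pquad k * gk k t := by
  by_cases hP : Pquad k = 0
  · have hgk : gk k = fun t : ℝ => 1 + Complex.I * k 0 * (t : ℂ) := by
      funext t
      simp [gk, hP, Cfun_zero, Sfun_zero]
    rw [hgk]
    constructor
    · exact contDiff_const.add (contDiff_const.mul Complex.ofRealCLM.contDiff)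
    · refine ⟨fun _ => Complex.I * k 0, fun _ => 0, fun t => ?_,
        fun t => hasDerivAt_const t (Complex.I * k 0), fun t => by simp [hP]⟩
      have h := ((Complex.ofRealCLM.hasDerivAt (x := t)).const_mul (Complex.I * k 0)).const_add 1
      simpa using h
  · obtain ⟨a, ha⟩ := IsAlgClosed.exists_pow_nat_eq (Pquad k) (n := 2) (by norm_num)
    have ha0 : a ≠ 0 := fun h => hP (by rw [← ha, h]; simp)
    have hgk : gk k = fun t : ℝ =>
        Complex.cos ((t : ℂ) * a) + Complex.I * k 0 / a * Complex.sin ((t : ℂ) * a) := by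
      funext t
      have h1 : (t : ℂ) ^ 2 * Pquad k = ((t : ℂ) * a) ^ 2 := by rw [← ha]; ring
      rw [gk, h1, Cfun_sq]
      congr 1
      rw [← Sfun_sq ((t : ℂ) * a)]
      field_simp
    have hlinC : ∀ w : ℂ, HasDerivAt (fun w : ℂ => w * a) a w := fun w => by
      simpa using (hasDerivAt_id w).mul_const a
    rw [hgk]
    refine ⟨?_, fun t => -a * Complex.sin ((t:ℂ) * a) + Complex.I * k 0 * Complex.cos ((t:ℂ) * a),
      fun t => -(a * a) * Complex.cos ((t:ℂ) * a) - Complex.I * k 0 * a * Complex.sin ((t:ℂ) * a),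
      fun t => ?_, fun t => ?_, fun t => ?_⟩
    · exact ((Complex.contDiff_cos.restrict_scalars ℝ).comp
        ((Complex.ofRealCLM.contDiff).mul contDiff_const)).add
        (contDiff_const.mul ((Complex.contDiff_sin.restrict_scalars ℝ).comp
          ((Complex.ofRealCLM.contDiff).mul contDiff_const)))
    · have h : HasDerivAt
          (fun w : ℂ => Complex.cos (w * a) + Complex.I * k 0 / a * Complex.sin (w * a))
          (-Complex.sin ((t:ℂ) * a) * a
            + Complex.I * k 0 / a * (Complex.cos ((t:ℂ) * a) * a)) (t : ℂ) :=
        ((hlinC _).ccos).add (((hlinC _).csin).const_mul _)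
      convert h.comp_ofReal using 1
      field_simp
    · have h : HasDerivAt
          (fun w : ℂ => -a * Complex.sin (w * a) + Complex.I * k 0 * Complex.cos (w * a))
          (-a * (Complex.cos ((t:ℂ) * a) * a)
            + Complex.I * k 0 * (-Complex.sin ((t:ℂ) * a) * a)) (t : ℂ) :=
        (((hlinC _).csin).const_mul (-a)).add (((hlinC _).ccos).const_mul (Complex.I * k 0))
      convert h.comp_ofReal using 1
      ring
    · show _ = -Pquad k * _
      rw [← ha]
      field_simp
      ring

private lemma analyticAt_Efun (β : Fin 4 → ℝ) (k : Fin 4 → ℂ) :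
    AnalyticAt ℂ (fun k' => Efun k' β) k := by
  have hproj : ∀ i : Fin 4, AnalyticAt ℂ (fun k' : Fin 4 → ℂ => k' i) k := fun i =>
    (ContinuousLinearMap.proj (R := ℂ) (φ := fun _ : Fin 4 => ℂ) i).analyticAt k
  have harg : AnalyticAt ℂ (fun k' : Fin 4 → ℂ => (β 0 : ℂ) ^ 2 * Pquad k') k := by
    unfold Pquad
    exact analyticAt_const.mul ((((hproj 1).pow 2).add ((hproj 2).pow 2)).add ((hproj 3).pow 2))
  have hC : AnalyticAt ℂ (fun k' : Fin 4 → ℂ => Cfun ((β 0 : ℂ) ^ 2 * Pquad k')) k :=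
    (analyticAt_Cfun _).comp harg
  have hS : AnalyticAt ℂ (fun k' : Fin 4 → ℂ => Sfun ((β 0 : ℂ) ^ 2 * Pquad k')) k :=
    (analyticAt_Sfun _).comp harg
  have hexparg : AnalyticAt ℂ (fun k' : Fin 4 → ℂ =>
      -(Complex.I * (k' 1 * (β 1 : ℂ) + k' 2 * (β 2 : ℂ) + k' 3 * (β 3 : ℂ)))) k := by
    exact (analyticAt_const.mul ((((hproj 1).mul analyticAt_const).add
      ((hproj 2).mul analyticAt_const)).add ((hproj 3).mul analyticAt_const))).neg
  have hexp : AnalyticAt ℂ (fun k' : Fin 4 → ℂ =>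
      Complex.exp (-(Complex.I * (k' 1 * (β 1 : ℂ) + k' 2 * (β 2 : ℂ) + k' 3 * (β 3 : ℂ))))) k :=
    (Complex.differentiable_exp.analyticAt _).comp hexparg
  unfold Efun
  exact (hC.add (((analyticAt_const.mul (hproj 0)).mul analyticAt_const).mul hS)).mul hexp

private lemma part_ii (K : EuclideanSpace ℝ (Fin 3)) (β : Fin 4 → ℝ) :
    Efun (lightC K) β = Complex.exp (Complex.I * ((mink β (lightR K) : ℝ) : ℂ)) := by
  have hnorm : (‖K‖ : ℝ) ^ 2 = (K 0) ^ 2 + (K 1) ^ 2 + (K 2) ^ 2 := by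
    rw [EuclideanSpace.norm_eq, Real.sq_sqrt (by positivity)]
    simp [Fin.sum_univ_three, sq_abs]
  have h0 : lightC K 0 = ((‖K‖ : ℝ) : ℂ) := rfl
  have h1 : lightC K 1 = ((K 0 : ℝ) : ℂ) := rfl
  have h2 : lightC K 2 = ((K 1 : ℝ) : ℂ) := rfl
  have h3 : lightC K 3 = ((K 2 : ℝ) : ℂ) := rfl
  have hPq : Pquad (lightC K) = (((β 0 * ‖K‖ : ℝ) : ℂ) / (β 0 : ℂ)) ^ 2 ∨ True := Or.inr trivial
  have harg : (β 0 : ℂ) ^ 2 * Pquad (lightC K) = (((β 0 * ‖K‖ : ℝ) : ℂ)) ^ 2 := by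
    rw [Pquad, h1, h2, h3]
    have hc : ((K 0 : ℝ):ℂ)^2 + ((K 1 : ℝ):ℂ)^2 + ((K 2 : ℝ):ℂ)^2 = ((‖K‖:ℝ):ℂ)^2 := by
      exact_mod_cast hnorm.symm
    rw [hc]
    push_cast
    ring
  rw [Efun, harg, Cfun_sq]
  have hSpart : Complex.I * lightC K 0 * (β 0 : ℂ) * Sfun ((((β 0 * ‖K‖ : ℝ) : ℂ)) ^ 2)
      = Complex.I * Complex.sin ((β 0 * ‖K‖ : ℝ) : ℂ) := by
    rw [h0, ← Sfun_sq (((β 0 * ‖K‖ : ℝ) : ℂ))]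
    push_cast
    ring
  rw [hSpart]
  have heuler : Complex.cos (((β 0 * ‖K‖ : ℝ) : ℂ)) + Complex.I * Complex.sin (((β 0 * ‖K‖ : ℝ) : ℂ))
      = Complex.exp ((((β 0 * ‖K‖ : ℝ) : ℂ)) * Complex.I) := by
    rw [← Complex.cos_add_sin_I]; ring
  rw [heuler, h1, h2, h3, ← Complex.exp_add]
  congr 1
  have hm : mink β (lightR K) = β 0 * ‖K‖ - β 1 * K 0 - β 2 * K 1 - β 3 * K 2 := rfl
  rw [hm]
  push_cast
  ring

/-- Core of Lemma 5.1(c): (i) k ↦ E(k, β) is entire analytic on ℂ⁴;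
(ii) for real k = (|𝐤|, 𝐤) one has E(k, β) = e^{i β·k} with β·k the
Minkowski product; (iii) β ↦ E(k, β) is smooth and solves the wave
equation for every fixed k ∈ ℂ⁴. -/
theorem Efun_entire_extension_of_lightlike_plane_waves :
    (∀ β : Fin 4 → ℝ, ∀ k : Fin 4 → ℂ, AnalyticAt ℂ (fun k' => Efun k' β) k) ∧
    (∀ (K : EuclideanSpace ℝ (Fin 3)) (β : Fin 4 → ℝ),
      Efun (lightC K) β = Complex.exp (Complex.I * ((mink β (lightR K) : ℝ) : ℂ))) ∧
    (∀ k : Fin 4 → ℂ,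
      ContDiff ℝ (⊤ : ℕ∞) (fun β => Efun k β) ∧ ∀ β : Fin 4 → ℝ, box (Efun k) β = 0) := by
  refine ⟨analyticAt_Efun, part_ii, fun k => ?_⟩
  obtain ⟨hsm, g', g'', hg, hg', hode⟩ := gk_props k
  constructor
  · have he : (fun β => Efun k β) = Efun k := rfl
    rw [he, Efun_decomp k]
    exact (contDiff_const.mul (hsm.comp (projR 0).contDiff)).mul
      ((Complex.contDiff_exp : ContDiff ℝ (⊤ : ℕ∞) Complex.exp).comp (lin4 (zk k)).contDiff)
  · intro β
    rw [Efun_decomp k, box_main (gk k) g' g'' hg hg' 1 (zk k) (by simp [zk]) β, hode]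
    have hzz : zk k 1 ^ 2 + zk k 2 ^ 2 + zk k 3 ^ 2 = -Pquad k := by
      simp only [zk, Pquad, Matrix.cons_val_zero, Matrix.cons_val_one, Matrix.head_cons, Matrix.cons_val_two,
        Matrix.tail_cons, Matrix.cons_val_three]
      ring_nf
      rw [Complex.I_sq]
      ring
    rw [hzz]
    ring
end
end

section
/- (Proposition 4.2, measure-family form) Let 𝒪 ⊆ ℝ⁴ be open, let B ⊆ V₊ be compact, and let (ρ_x)_{x∈𝒪} be a family of Borel probability measures on ℝ⁴ with supp ρ_x ⊆ B for all x. Assume that for every smooth Ξ : V₊ → ℂ with □Ξ = 0 on V₊, the function x ↦ ∫ Ξ dρ_x is smooth on 𝒪 and satisfies both the conservation law ∂₀ ∫ (∂₀Ξ) dρ_x − Σ_{i=1}^{3} ∂ᵢ ∫ (∂ᵢΞ) dρ_x = 0 and the wave equation □_x ∫ Ξ dρ_x = 0 on 𝒪 (these are the conclusions of Lemma 4.1 for S_𝒪-thermal states). Then for every positive lightlike p ∈ ℝ⁴, the function G_p(x) := ∫ (e^{β·p} − 1)⁻¹ dρ_x(β) satisfies the collisionless transport equation Σ_ν pᵥ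 ∂_ν G_p(x) = 0 and the wave equation □G_p(x) = 0 for all x ∈ 𝒪. -/
open MeasureTheory

noncomputable section

/-- A vector p is positive lightlike if p ≠ 0, p·p = 0 and p₀ > 0. -/
def PosLightlike (p : Fin 4 → ℝ) : Prop := p ≠ 0 ∧ mink p p = 0 ∧ 0 < p 0

namespace PlanckAux

/-- The linear functional β ↦ mink β p, as a continuous linear map. -/
def Lp (p : Fin 4 → ℝ) : (Fin 4 → ℝ) →L[ℝ] ℝ :=
  p 0 • ContinuousLinearMap.proj 0 - p 1 • ContinuousLinearMap.proj 1
    - p 2 • ContinuousLinearMap.proj 2 - p 3 • ContinuousLinearMap.proj 3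

lemma Lp_apply (p x : Fin 4 → ℝ) : Lp p x = mink x p := by
  simp [Lp, mink, mul_comm]

lemma Lp_single0 (p : Fin 4 → ℝ) : Lp p (Pi.single (0 : Fin 4) 1) = p 0 := by
  simp [Lp, Pi.single_apply]

lemma Lp_single1 (p : Fin 4 → ℝ) : Lp p (Pi.single (1 : Fin 4) 1) = -(p 1) := by
  simp [Lp, Pi.single_apply]

lemma Lp_single2 (p : Fin 4 → ℝ) : Lp p (Pi.single (2 : Fin 4) 1) = -(p 2) := by
  simp [Lp, Pi.single_apply]

lemma Lp_single3 (p : Fin 4 → ℝ) : Lp p (Pi.single (3 : Fin 4) 1) = -(p 3) := by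
  simp [Lp, Pi.single_apply]

/-- mink β p > 0 for β in the forward cone and p positive lightlike. -/
lemma mink_pos {p : Fin 4 → ℝ} (hp : PosLightlike p) {β : Fin 4 → ℝ}
    (hβ : β ∈ Vplus) : 0 < mink β p := by
  obtain ⟨_, hpp, hp0⟩ := hp
  obtain ⟨hb0, hbb⟩ := hβ
  unfold mink at *
  have hCS : (β 1 * p 1 + β 2 * p 2 + β 3 * p 3)^2
      ≤ (β 1 * β 1 + β 2 * β 2 + β 3 * β 3) * (p 1 * p 1 + p 2 * p 2 + p 3 * p 3) := by
    nlinarith [sq_nonneg (β 1 * p 2 - β 2 * p 1), sq_nonneg (β 1 * p 3 - β 3 * p 1),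
      sq_nonneg (β 2 * p 3 - β 3 * p 2)]
  have h1 : (β 1 * p 1 + β 2 * p 2 + β 3 * p 3)^2 < (β 0 * p 0)^2 := by
    nlinarith [hCS, mul_pos hp0 hp0, hbb, hpp]
  nlinarith [h1, mul_pos hb0 hp0]

/-- pd of a composite g ∘ Lp. -/
lemma pd_comp (p : Fin 4 → ℝ) {g : ℝ → ℂ} {a : ℂ} {x : Fin 4 → ℝ}
    (h : HasDerivAt g a (Lp p x)) (ν : Fin 4) :
    pd ν (fun y => g (Lp p y)) x = Lp p (Pi.single ν 1) • a := by
  have H : HasFDerivAt (fun y => g (Lp p y))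
      (((1 : ℝ →L[ℝ] ℝ).smulRight a).comp (Lp p)) x :=
    (h.hasFDerivAt).comp x (Lp p).hasFDerivAt
  rw [pd, H.fderiv]
  simp

lemma pd_ofReal (h : (Fin 4 → ℝ) → ℝ) (ν : Fin 4) (x : Fin 4 → ℝ) :
    pd ν (fun y => ((h y : ℝ) : ℂ)) x = ((pd ν h x : ℝ) : ℂ) := by
  by_cases hd : DifferentiableAt ℝ h x
  · have H : HasFDerivAt (fun y => ((h y : ℝ) : ℂ))
        (Complex.ofRealCLM.comp (fderiv ℝ h x)) x :=
      Complex.ofRealCLM.hasFDerivAt.comp x hd.hasFDerivAt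
    rw [pd, H.fderiv]
    simp [pd]
  · have hd2 : ¬ DifferentiableAt ℝ (fun y => ((h y : ℝ) : ℂ)) x := by
      intro hdd
      have h' : DifferentiableAt ℝ (fun y => ((h y : ℂ)).re) x :=
        (Complex.reCLM.differentiableAt).comp x hdd
      exact hd (by simpa using h')
    rw [pd, pd, fderiv_zero_of_not_differentiableAt hd,
      fderiv_zero_of_not_differentiableAt hd2]
    simp

lemma box_ofReal (h : (Fin 4 → ℝ) → ℝ) (x : Fin 4 → ℝ) :
    box (fun y => ((h y : ℝ) : ℂ)) x = ((box h x : ℝ) : ℂ) := by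
  have key : ∀ ν, pd ν (fun y => ((h y : ℝ) : ℂ)) = fun y => ((pd ν h y : ℝ) : ℂ) :=
    fun ν => funext fun y => pd_ofReal h ν y
  unfold box
  rw [key 0, key 1, key 2, key 3, pd_ofReal, pd_ofReal, pd_ofReal, pd_ofReal]
  push_cast
  ring

/-- The composite g ∘ Lp is smooth on V₊ if g is smooth on (0,∞). -/
lemma contDiffOn_comp {p : Fin 4 → ℝ} (hp : PosLightlike p) {g : ℝ → ℂ}
    (hg : ContDiffOn ℝ (⊤ : ℕ∞) g (Set.Ioi 0)) :
    ContDiffOn ℝ (⊤ : ℕ∞) (fun y => g (Lp p y)) Vplus := by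
  apply hg.comp ((Lp p).contDiff.contDiffOn)
  intro β hβ
  rw [Lp_apply]
  exact mink_pos hp hβ

lemma pd_congr_nhds {E : Type*} [NormedAddCommGroup E] [NormedSpace ℝ E]
    {f g : (Fin 4 → ℝ) → E} {x : Fin 4 → ℝ} (h : f =ᶠ[nhds x] g) (μ : Fin 4) :
    pd μ f x = pd μ g x := by
  unfold pd; rw [h.fderiv_eq]

lemma pd_smul {E : Type*} [NormedAddCommGroup E] [NormedSpace ℝ E]
    {f : (Fin 4 → ℝ) → E} {x : Fin 4 → ℝ} (h : DifferentiableAt ℝ f x) (c : ℝ) (μ : Fin 4) :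
    pd μ (fun y => c • f y) x = c • pd μ f x := by
  unfold pd; rw [fderiv_fun_const_smul h]; rfl

/-- The d'Alembertian of g ∘ Lp vanishes where g is smooth, for lightlike p. -/
lemma box_comp {p : Fin 4 → ℝ} (hpp : mink p p = 0) {g : ℝ → ℂ}
    (hg : ContDiffOn ℝ (⊤ : ℕ∞) g (Set.Ioi 0)) {β : Fin 4 → ℝ} (hβ : 0 < Lp p β) :
    box (fun y => g (Lp p y)) β = 0 := by
  have hUopen : IsOpen ((Lp p) ⁻¹' (Set.Ioi 0)) :=
    (Lp p).continuous.isOpen_preimage _ isOpen_Ioi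
  have hgd : ∀ u : ℝ, 0 < u → HasDerivAt g (deriv g u) u := fun u hu =>
    ((hg.differentiableOn (by simp)).differentiableAt (isOpen_Ioi.mem_nhds hu)).hasDerivAt
  have hg' : ContDiffOn ℝ (⊤ : ℕ∞) (deriv g) (Set.Ioi 0) := hg.deriv_of_isOpen isOpen_Ioi (by simp)
  have hg'd : ∀ u : ℝ, 0 < u → HasDerivAt (deriv g) (deriv (deriv g) u) u := fun u hu =>
    ((hg'.differentiableOn (by simp)).differentiableAt (isOpen_Ioi.mem_nhds hu)).hasDerivAt
  have step1 : ∀ (ν : Fin 4) y, 0 < Lp p y →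
      pd ν (fun z => g (Lp p z)) y = Lp p (Pi.single ν 1) • deriv g (Lp p y) :=
    fun ν y hy => pd_comp p (hgd _ hy) ν
  have step2 : ∀ (μ ν : Fin 4), pd μ (pd ν (fun z => g (Lp p z))) β
      = Lp p (Pi.single ν 1) • (Lp p (Pi.single μ 1) • deriv (deriv g) (Lp p β)) := by
    intro μ ν
    have hev : pd ν (fun z => g (Lp p z)) =ᶠ[nhds β]
        fun y => Lp p (Pi.single ν 1) • deriv g (Lp p y) := by
      filter_upwards [hUopen.mem_nhds (show β ∈ (Lp p) ⁻¹' (Set.Ioi 0) from hβ)] with y hy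
      exact step1 ν y hy
    have hdiff : DifferentiableAt ℝ (fun y => deriv g (Lp p y)) β :=
      ((hg'.differentiableOn (by simp)).differentiableAt
        (isOpen_Ioi.mem_nhds hβ)).comp β (Lp p).differentiableAt
    calc pd μ (pd ν (fun z => g (Lp p z))) β
        = pd μ (fun y => Lp p (Pi.single ν 1) • deriv g (Lp p y)) β :=
          pd_congr_nhds hev μ
      _ = Lp p (Pi.single ν 1) • pd μ (fun y => deriv g (Lp p y)) β :=
          pd_smul hdiff _ μ
      _ = _ := by rw [pd_comp p (hg'd _ hβ) μ]
  unfold box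
  rw [step2 0 0, step2 1 1, step2 2 2, step2 3 3, Lp_single0, Lp_single1, Lp_single2,
    Lp_single3]
  have hc : ((p 0 * p 0 - p 1 * p 1 - p 2 * p 2 - p 3 * p 3 : ℝ) : ℂ) = 0 := by
    rw [show (p 0 * p 0 - p 1 * p 1 - p 2 * p 2 - p 3 * p 3 : ℝ) = mink p p from rfl, hpp]
    simp
  push_cast at hc
  simp only [smul_smul, Complex.real_smul]
  push_cast
  linear_combination (deriv (deriv g) (Lp p β)) * hc

/-- g₂: the Planck density as a function of the scalar u = β·p. -/
def g2 (u : ℝ) : ℂ := (((Real.exp u - 1)⁻¹ : ℝ) : ℂ)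

/-- g₁: a primitive of the Planck density. -/
def g1 (u : ℝ) : ℂ := ((Real.log (1 - Real.exp (-u)) : ℝ) : ℂ)

lemma exp_one_lt {u : ℝ} (hu : 0 < u) : 1 < Real.exp u := by
  calc (1 : ℝ) = Real.exp 0 := Real.exp_zero.symm
    _ < Real.exp u := Real.exp_lt_exp.mpr hu

lemma one_sub_exp_neg_pos {u : ℝ} (hu : 0 < u) : 0 < 1 - Real.exp (-u) := by
  have : Real.exp (-u) < Real.exp 0 := Real.exp_lt_exp.mpr (by linarith)
  rw [Real.exp_zero] at this
  linarith

lemma contDiffOn_g2 : ContDiffOn ℝ (⊤ : ℕ∞) g2 (Set.Ioi 0) := by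
  intro u hu
  apply ContDiffAt.contDiffWithinAt
  have h1 : ContDiffAt ℝ (⊤ : ℕ∞) (fun u : ℝ => Real.exp u - 1) u :=
    (Real.contDiff_exp.sub contDiff_const).contDiffAt
  have h2 : ContDiffAt ℝ (⊤ : ℕ∞) (fun u : ℝ => (Real.exp u - 1)⁻¹) u :=
    h1.inv (sub_ne_zero.mpr (ne_of_gt (exp_one_lt (Set.mem_Ioi.mp hu))))
  exact (Complex.ofRealCLM.contDiff.contDiffAt).comp u h2

lemma contDiffOn_g1 : ContDiffOn ℝ (⊤ : ℕ∞) g1 (Set.Ioi 0) := by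
  intro u hu
  apply ContDiffAt.contDiffWithinAt
  have h1 : ContDiffAt ℝ (⊤ : ℕ∞) (fun u : ℝ => 1 - Real.exp (-u)) u :=
    (contDiff_const.sub (Real.contDiff_exp.comp contDiff_neg)).contDiffAt
  have h2 : ContDiffAt ℝ (⊤ : ℕ∞) (fun u : ℝ => Real.log (1 - Real.exp (-u))) u :=
    by have := (Real.contDiffAt_log.mpr (ne_of_gt (one_sub_exp_neg_pos (Set.mem_Ioi.mp hu)))).comp u h1; exact this
  exact (Complex.ofRealCLM.contDiff.contDiffAt).comp u h2

lemma hasDerivAt_g1 {u : ℝ} (hu : 0 < u) : HasDerivAt g1 (g2 u) u := by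
  have h1 : HasDerivAt (fun v : ℝ => -v) (-1) u := (hasDerivAt_id u).neg
  have h2 : HasDerivAt (fun v : ℝ => Real.exp (-v)) (Real.exp (-u) * (-1)) u :=
    (Real.hasDerivAt_exp (-u)).comp u h1
  have h3 : HasDerivAt (fun v : ℝ => 1 - Real.exp (-v)) (Real.exp (-u)) u := by
    have := (hasDerivAt_const u (1 : ℝ)).sub h2
    have := h2.const_sub (1 : ℝ)
    rwa [mul_neg_one, neg_neg] at this
  have hne : (1 : ℝ) - Real.exp (-u) ≠ 0 := ne_of_gt (one_sub_exp_neg_pos hu)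
  have h4 : HasDerivAt (fun v : ℝ => Real.log (1 - Real.exp (-v)))
      ((1 - Real.exp (-u))⁻¹ * Real.exp (-u)) u :=
    by have := (Real.hasDerivAt_log hne).comp u h3; exact this
  have hval : (1 - Real.exp (-u))⁻¹ * Real.exp (-u) = (Real.exp u - 1)⁻¹ := by
    have he : Real.exp u ≠ 0 := Real.exp_ne_zero u
    have he1 : Real.exp u - 1 ≠ 0 := ne_of_gt (by linarith [exp_one_lt hu])
    rw [Real.exp_neg] at *
    field_simp
  rw [hval] at h4
  exact h4.ofReal_comp

end PlanckAux

open PlanckAux in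
/-- Proposition 4.2 (measure-family form): if the lifts x ↦ ∫ Ξ dρ_x of a
local equilibrium state satisfy, for every admissible macro-observable Ξ
(smooth solution of the wave equation on V₊), the conservation law
∂₀∫(∂₀Ξ)dρ_x − Σᵢ ∂ᵢ∫(∂ᵢΞ)dρ_x = 0 and the wave equation
□ₓ ∫ Ξ dρ_x = 0 on 𝒪, then for every positive lightlike p the expected
Planck density G_p(x) = ∫ (e^{β·p} − 1)⁻¹ dρ_x(β) satisfies the
collisionless transport equation Σᵥ pᵥ ∂ᵥ G_p = 0 and the wave equation
□G_p = 0 on 𝒪. -/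
theorem planck_density_transport_and_wave
    (O : Set (Fin 4 → ℝ)) (hOopen : IsOpen O)
    (B : Set (Fin 4 → ℝ)) (hBc : IsCompact B) (hBV : B ⊆ Vplus)
    (ρ : (Fin 4 → ℝ) → Measure (Fin 4 → ℝ))
    (hprob : ∀ x, IsProbabilityMeasure (ρ x))
    (hsupp : ∀ x, ρ x Bᶜ = 0)
    (hyp : ∀ Ξ : (Fin 4 → ℝ) → ℂ, ContDiffOn ℝ (⊤ : ℕ∞) Ξ Vplus →
      (∀ β ∈ Vplus, box Ξ β = 0) →
      ContDiffOn ℝ (⊤ : ℕ∞) (fun x => ∫ β, Ξ β ∂(ρ x)) O ∧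
      (∀ x ∈ O,
        pd 0 (fun x' => ∫ β, pd 0 Ξ β ∂(ρ x')) x
          - ∑ i : Fin 3, pd i.succ (fun x' => ∫ β, pd i.succ Ξ β ∂(ρ x')) x = 0) ∧
      (∀ x ∈ O, box (fun x' => ∫ β, Ξ β ∂(ρ x')) x = 0))
    (p : Fin 4 → ℝ) (hp : PosLightlike p) :
    ∀ x ∈ O,
      (∑ ν : Fin 4, p ν *
          pd ν (fun x' => ∫ β, (Real.exp (mink β p) - 1)⁻¹ ∂(ρ x')) x = 0) ∧
      box (fun x' => ∫ β, (Real.exp (mink β p) - 1)⁻¹ ∂(ρ x')) x = 0 := by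
  obtain ⟨hpne, hpp, hp0⟩ := hp
  have hp' : PosLightlike p := ⟨hpne, hpp, hp0⟩
  -- the real-valued Planck lift and its complex version
  set G : (Fin 4 → ℝ) → ℝ := fun x => ∫ β, (Real.exp (mink β p) - 1)⁻¹ ∂(ρ x) with hG
  have hLpos : ∀ β ∈ Vplus, 0 < Lp p β := by
    intro β hβ; rw [Lp_apply]; exact mink_pos hp' hβ
  -- Ξ₂ : the complex Planck observable
  have hΞ2eq : ∀ x, (∫ β, g2 (Lp p β) ∂(ρ x)) = ((G x : ℝ) : ℂ) := by
    intro x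
    have : (fun β => g2 (Lp p β)) = fun β => (((Real.exp (mink β p) - 1)⁻¹ : ℝ) : ℂ) := by
      funext β; rw [g2, Lp_apply]
    rw [this]; exact integral_ofReal
  obtain ⟨hsm2, _, hwave2⟩ := hyp (fun β => g2 (Lp p β))
    (contDiffOn_comp hp' contDiffOn_g2)
    (fun β hβ => box_comp hpp contDiffOn_g2 (hLpos β hβ))
  have hGc : (fun x => ∫ β, g2 (Lp p β) ∂(ρ x)) = fun x => ((G x : ℝ) : ℂ) :=
    funext hΞ2eq
  rw [hGc] at hsm2 hwave2
  -- Ξ₁ : the primitive observable, giving the conservation law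
  obtain ⟨_, hcons, _⟩ := hyp (fun β => g1 (Lp p β))
    (contDiffOn_comp hp' contDiffOn_g1)
    (fun β hβ => box_comp hpp contDiffOn_g1 (hLpos β hβ))
  intro x hx
  have hGcdiff : DifferentiableAt ℝ (fun x => ((G x : ℝ) : ℂ)) x :=
    (hsm2.differentiableOn (by simp)).differentiableAt (hOopen.mem_nhds hx)
  -- rewrite the integrals of pd ν Ξ₁
  have hint : ∀ (ν : Fin 4) x', (∫ β, pd ν (fun z => g1 (Lp p z)) β ∂(ρ x'))
      = Lp p (Pi.single ν 1) • ((G x' : ℝ) : ℂ) := by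
    intro ν x'
    have hae : (fun β => pd ν (fun z => g1 (Lp p z)) β)
        =ᵐ[ρ x'] fun β => Lp p (Pi.single ν 1) • g2 (Lp p β) := by
      rw [Filter.eventuallyEq_iff_exists_mem]
      refine ⟨Bᶜᶜ, ?_, ?_⟩
      · rw [MeasureTheory.mem_ae_iff]; simpa using hsupp x'
      · intro β hβ
        rw [compl_compl] at hβ
        exact pd_comp p (hasDerivAt_g1 (hLpos β (hBV hβ))) ν
    rw [integral_congr_ae hae, integral_smul]
    have : (∫ β, g2 (Lp p β) ∂(ρ x')) = ((G x' : ℝ) : ℂ) := hΞ2eq x'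
    rw [this]
  have hintf : ∀ ν : Fin 4, (fun x' => ∫ β, pd ν (fun z => g1 (Lp p z)) β ∂(ρ x'))
      = fun x' => Lp p (Pi.single ν 1) • ((G x' : ℝ) : ℂ) :=
    fun ν => funext (hint ν)
  have hcx := hcons x hx
  rw [hintf 0] at hcx
  simp only [hintf] at hcx
  -- reduce pd of scaled lift
  have hpdsmul : ∀ (μ : Fin 4) (c : ℝ),
      pd μ (fun x' => c • ((G x' : ℝ) : ℂ)) x = c • ((pd μ G x : ℝ) : ℂ) := by
    intro μ c
    rw [pd, fderiv_fun_const_smul hGcdiff c]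
    have : pd μ (fun x' => ((G x' : ℝ) : ℂ)) x = ((pd μ G x : ℝ) : ℂ) := pd_ofReal G μ x
    rw [pd] at this
    simp only [ContinuousLinearMap.smul_apply, this]
  rw [Fin.sum_univ_three] at hcx
  rw [show ((0 : Fin 3).succ : Fin 4) = 1 from rfl, show ((1 : Fin 3).succ : Fin 4) = 2 from rfl,
    show ((2 : Fin 3).succ : Fin 4) = 3 from rfl] at hcx
  rw [hpdsmul 0, hpdsmul 1, hpdsmul 2, hpdsmul 3, Lp_single0, Lp_single1, Lp_single2,
    Lp_single3] at hcx
  simp only [Complex.real_smul] at hcx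
  push_cast at hcx
  constructor
  · -- transport equation
    have hC : ((p 0 * pd 0 G x + p 1 * pd 1 G x + p 2 * pd 2 G x + p 3 * pd 3 G x : ℝ) : ℂ)
        = 0 := by
      push_cast
      linear_combination hcx
    have hR : p 0 * pd 0 G x + p 1 * pd 1 G x + p 2 * pd 2 G x + p 3 * pd 3 G x = 0 := by
      exact_mod_cast hC
    rw [Fin.sum_univ_four]
    linarith
  · -- wave equation
    have hw := hwave2 x hx
    rw [box_ofReal] at hw
    exact_mod_cast hw
end
end
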